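/- arXiv:1312.6048 — 8 statements merged into one kernel-verified Lean document; each statement's English description precedes it below -/
import Mathlib

section
/- If K and L are linear subspaces of ℝ^n such that the set of sign vectors of K equals the set of sign vectors of L, then dim(K) = dim(L). -/
open Matrix

noncomputable section

def signVec {n : ℕ} (x : Fin n → ℝ) : Fin n → SignType := fun i => SignType.sign (x i)

def signSet {n : ℕ} (L : Submodule ℝ (Fin n → ℝ)) : Set (Fin n → SignType) :=
  signVec '' (L : Set (Fin n → ℝ))

def IsRationalVec {n : ℕ} (v : Fin n → ℝ) : Prop := ∀ i, ∃ q : ℚ, v i = (q : ℝ)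

def IsRationalSubspace {n : ℕ} (K : Submodule ℝ (Fin n → ℝ)) : Prop :=
  ∃ s : Set (Fin n → ℝ), (∀ v ∈ s, IsRationalVec v) ∧ Submodule.span ℝ s = K

def IsRationalMatrix {m n : ℕ} (B : Matrix (Fin m) (Fin n) ℝ) : Prop :=
  ∀ i j, ∃ q : ℚ, B i j = (q : ℝ)

def mr {m n : ℕ} (A : Matrix (Fin m) (Fin n) SignType) : ℕ :=
  sInf {r | ∃ B : Matrix (Fin m) (Fin n) ℝ, (∀ i j, SignType.sign (B i j) = A i j) ∧ B.rank = r}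

def SignPerp {n : ℕ} (c x : Fin n → SignType) : Prop :=
  (∀ i, c i = 0 ∨ x i = 0) ∨
  (∃ i j, c i = x i ∧ c i ≠ 0 ∧ c j = -(x j) ∧ c j ≠ 0)
/-- A strictly increasing chain of supports of length `k` inside `L`. -/
def ChainIn {n : ℕ} (L : Submodule ℝ (Fin n → ℝ)) (k : ℕ) (x : ℕ → Fin n → ℝ) : Prop :=
  (∀ j < k, x j ∈ L) ∧ (∀ j < k, (Function.support (x j)).Nonempty) ∧
  (∀ j, j + 1 < k → Function.support (x j) ⊂ Function.support (x (j+1)))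

lemma chain_mono {n : ℕ} {L : Submodule ℝ (Fin n → ℝ)} {k : ℕ} {x : ℕ → Fin n → ℝ}
    (hc : ChainIn L k x) {a b : ℕ} (hab : a ≤ b) (hb : b < k) :
    Function.support (x a) ⊆ Function.support (x b) := by
  induction b, hab using Nat.le_induction with
  | base => exact subset_rfl
  | succ m hm ih =>
    exact (ih (lt_trans (Nat.lt_succ_self m) hb)).trans (hc.2.2 m hb).subset

lemma chain_le_finrank {n : ℕ} : ∀ (k : ℕ) (L : Submodule ℝ (Fin n → ℝ)) (x : ℕ → Fin n → ℝ),
    ChainIn L k x → k ≤ Module.finrank ℝ L := by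
  intro k
  induction k with
  | zero => intro L x _; exact Nat.zero_le _
  | succ k ih =>
    intro L x hc
    -- pick coordinate i in supp (x k) not in supp (x (k-1)) (or any coord of supp x 0 if k = 0)
    have hik : ∃ i, i ∈ Function.support (x k) ∧ ∀ j < k, x j i = 0 := by
      rcases Nat.eq_zero_or_pos k with hk0 | hkpos
      · subst hk0
        obtain ⟨i, hi⟩ := hc.2.1 0 (Nat.lt_succ_self 0)
        exact ⟨i, hi, fun j hj => absurd hj (Nat.not_lt_zero j)⟩
      · obtain ⟨m, rfl⟩ : ∃ m, k = m + 1 := ⟨k - 1, by omega⟩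
        have hstrict := hc.2.2 m (by omega)
        obtain ⟨i, hi, hni⟩ := Set.exists_of_ssubset hstrict
        refine ⟨i, hi, fun j hj => ?_⟩
        have : Function.support (x j) ⊆ Function.support (x m) :=
          chain_mono hc (by omega) (by omega)
        by_contra hxi
        exact hni (this hxi)
    obtain ⟨i, hi, hz⟩ := hik
    set L' : Submodule ℝ (Fin n → ℝ) := L ⊓ LinearMap.ker (LinearMap.proj i) with hL'
    have hchain' : ChainIn L' k x := by
      refine ⟨fun j hj => ?_, fun j hj => hc.2.1 j (by omega), fun j hj => hc.2.2 j (by omega)⟩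
      exact ⟨hc.1 j (by omega), hz j hj⟩
    have hk' : k ≤ Module.finrank ℝ L' := ih L' x hchain'
    have hlt : L' < L := by
      refine lt_of_le_of_ne inf_le_left (fun he => ?_)
      have hxkL : x k ∈ L' := he ▸ hc.1 k (Nat.lt_succ_self k)
      exact hi hxkL.2
    have := Submodule.finrank_lt_finrank_of_lt hlt
    omega

lemma exists_chain {n : ℕ} : ∀ (r : ℕ) (L : Submodule ℝ (Fin n → ℝ)),
    Module.finrank ℝ L ≤ r → ∃ x, ChainIn L (Module.finrank ℝ L) x := by
  intro r
  induction r with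
  | zero =>
    intro L hL
    refine ⟨fun _ => 0, fun j hj => by omega, fun j hj => by omega, fun j hj => by omega⟩
  | succ r ih =>
    intro L hL
    rcases Nat.lt_succ_iff_lt_or_eq.mp (Nat.lt_succ_of_le hL) with h | hr
    · exact ih L (by omega)
    · -- finrank L = r + 1
      have hne : L ≠ ⊥ := by
        intro hbot
        rw [hbot] at hr
        simp [Submodule.finrank_eq_zero.mpr rfl] at hr
      obtain ⟨z, hzL, hz0⟩ := Submodule.exists_mem_ne_zero_of_ne_bot hne
      obtain ⟨i, hzi⟩ : ∃ i, z i ≠ 0 := Function.ne_iff.mp hz0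
      set L' : Submodule ℝ (Fin n → ℝ) := L ⊓ LinearMap.ker (LinearMap.proj i) with hL'def
      -- finrank L' = r
      have hltL : L' < L := by
        refine lt_of_le_of_ne inf_le_left (fun he => ?_)
        have : z ∈ L' := he ▸ hzL
        exact hzi this.2
      have hlt : Module.finrank ℝ L' < Module.finrank ℝ L :=
        Submodule.finrank_lt_finrank_of_lt hltL
      have hge : Module.finrank ℝ L ≤ Module.finrank ℝ L' + 1 := by
        set φ : L →ₗ[ℝ] ℝ := (LinearMap.proj i).comp L.subtype with hφ
        have hker : LinearMap.ker φ = Submodule.comap L.subtype L' := by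
          ext v
          simp [hφ, hL'def, v.2]
        have h1 := LinearMap.finrank_range_add_finrank_ker φ
        have h2 : Module.finrank ℝ (LinearMap.ker φ) = Module.finrank ℝ L' := by
          rw [hker]
          exact (Submodule.comapSubtypeEquivOfLe (inf_le_left)).finrank_eq
        have h3 : Module.finrank ℝ (LinearMap.range φ) ≤ 1 := by
          have := Submodule.finrank_le (LinearMap.range φ)
          simpa using this
        omega
      have hr' : Module.finrank ℝ L' = r := by omega
      obtain ⟨y, hy⟩ := ih L' (by omega)
      rw [hr'] at hy
      -- previous top element (or 0 if r = 0)
      set prev : Fin n → ℝ := if r = 0 then 0 else y (r - 1) with hprev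
      have hprevL' : prev ∈ L' := by
        rw [hprev]
        split
        · exact L'.zero_mem
        · next h0 => exact hy.1 (r-1) (by omega)
      have hprevi : prev i = 0 := hprevL'.2
      -- choose t
      have hbad : (insert (0:ℝ) (Set.range fun j : Fin n => -(prev j) / (z j))).Finite :=
        (Set.finite_range _).insert 0
      obtain ⟨t, ht⟩ := hbad.infinite_compl.nonempty
      have ht0 : t ≠ 0 := fun h => ht (by simp [h])
      have htj : ∀ j : Fin n, t ≠ -(prev j) / (z j) := by
        intro j he
        exact ht (Set.mem_insert_of_mem _ ⟨j, he.symm⟩)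
      set w : Fin n → ℝ := prev + t • z with hw
      have hwL : w ∈ L := L.add_mem hprevL'.1 (L.smul_mem t hzL)
      have hwsupp : ∀ j, prev j ≠ 0 → w j ≠ 0 := by
        intro j hpj hwj
        have hwj' : prev j + t * z j = 0 := hwj
        rcases eq_or_ne (z j) 0 with hzj | hzj
        · rw [hzj, mul_zero, add_zero] at hwj'; exact hpj hwj'
        · exact htj j (by field_simp; linarith)
      have hwi : w i ≠ 0 := by
        have : w i = t * z i := by simp [hw, hprevi]
        rw [this]
        exact mul_ne_zero ht0 hzi
      have hss : Function.support prev ⊂ Function.support w := by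
        constructor
        · intro j hj; exact hwsupp j hj
        · intro hsub
          exact (by simpa [hprevi] using hsub hwi : False)
      refine ⟨fun j => if j < r then y j else w, ?_⟩
      rw [hr]
      refine ⟨fun j hj => ?_, fun j hj => ?_, fun j hj => ?_⟩
      · by_cases hjr : j < r
        · simpa [hjr] using (hy.1 j hjr).1
        · simpa [hjr] using hwL
      · by_cases hjr : j < r
        · simpa [hjr] using hy.2.1 j hjr
        · simp only [hjr, if_neg, if_false]
          exact ⟨i, hwi⟩
      · by_cases hj1 : j + 1 < r
        · have hjr : j < r := by omega
          simpa [hjr, hj1] using hy.2.2 j hj1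
        · have hjr : j < r := by omega
          have hj1r : ¬ (j + 1 < r) := hj1
          have hjeq : j = r - 1 := by omega
          have hprev' : prev = y j := by
            rw [hprev, hjeq]
            split
            · omega
            · rfl
          simp only [if_pos hjr, if_neg hj1r]
          rw [← hprev']
          exact hss

lemma support_eq_of_signVec_eq {n : ℕ} {u v : Fin n → ℝ} (h : signVec u = signVec v) :
    Function.support u = Function.support v := by
  ext i
  have := congrFun h i
  simp only [signVec] at this
  simp only [Function.mem_support]
  rw [ne_eq, ne_eq, ← sign_eq_zero_iff (a := u i), ← sign_eq_zero_iff (a := v i), this]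

lemma chain_transfer {n : ℕ} {K L : Submodule ℝ (Fin n → ℝ)} (h : signSet K = signSet L)
    {k : ℕ} {x : ℕ → Fin n → ℝ} (hc : ChainIn K k x) : ∃ x', ChainIn L k x' := by
  have hch : ∀ j : ℕ, ∃ y, j < k → y ∈ L ∧ Function.support y = Function.support (x j) := by
    intro j
    by_cases hj : j < k
    · have : signVec (x j) ∈ signSet L := by
        rw [← h]
        exact ⟨x j, hc.1 j hj, rfl⟩
      obtain ⟨y, hyL, hy⟩ := this
      exact ⟨y, fun _ => ⟨hyL, support_eq_of_signVec_eq hy⟩⟩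
    · exact ⟨0, fun hj' => absurd hj' hj⟩
  choose x' hx' using hch
  refine ⟨x', fun j hj => (hx' j hj).1, fun j hj => ?_, fun j hj => ?_⟩
  · rw [(hx' j hj).2]; exact hc.2.1 j hj
  · rw [(hx' j (by omega)).2, (hx' (j+1) hj).2]
    exact hc.2.2 j hj

theorem stmt_0 {n : ℕ} (K L : Submodule ℝ (Fin n → ℝ))
    (h : signSet K = signSet L) :
    Module.finrank ℝ K = Module.finrank ℝ L := by
  have key : ∀ K' L' : Submodule ℝ (Fin n → ℝ), signSet K' = signSet L' →
      Module.finrank ℝ K' ≤ Module.finrank ℝ L' := by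
    intro K' L' h'
    obtain ⟨x, hx⟩ := exists_chain (Module.finrank ℝ K') K' le_rfl
    obtain ⟨x', hx'⟩ := chain_transfer h' hx
    exact chain_le_finrank _ L' x' hx'
  exact le_antisymm (key K L h) (key L K h.symm)
end
end

section
/- Let L be a rational subspace of ℝ^n (i.e., L has a basis of vectors with rational entries) and let B be an n×k real matrix whose columns form a rational basis of L. Then for every sign vector s ∈ sign(L), there exists a rational vector x ∈ ℚ^k such that sign(Bx) = s. -/
open Matrix

noncomputable section

/-!
Write a vector of `L` with sign pattern `s` as `B c`. The rows of `B` on which `B c` vanishes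
form a rational matrix `A` with `A c = 0`. Rational points are dense in the real kernel of a
rational matrix: if `A Aᵀ Y = A` (solvable over `ℚ`, since `A Aᵀ` and `A` have the same column
space), then `I - Aᵀ Y` is a rational matrix that projects onto the real kernel of `A`. A rational
`x` in the kernel of `A` close enough to `c` then gives `B x` the zeros of `B c` and, by
continuity, its other signs as well.
-/

namespace Matrix

variable {m k R : Type*} [Fintype m] [Fintype k] [Field R] [LinearOrder R] [IsStrictOrderedRing R]

theorem exists_mul_transpose_mul_eq (A : Matrix m k R) :
    ∃ Y : Matrix m k R, A * Aᵀ * Y = A := by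
  classical
  have hrange : LinearMap.range (A * Aᵀ).mulVecLin = LinearMap.range A.mulVecLin := by
    refine Submodule.eq_of_le_of_finrank_le ?_ (rank_self_mul_transpose A).ge
    rw [mulVecLin_mul]
    exact LinearMap.range_comp_le_range _ _
  have hcol : ∀ j, A.col j ∈ LinearMap.range (A * Aᵀ).mulVecLin := fun j => by
    rw [hrange]
    exact ⟨Pi.single j 1, mulVec_single_one A j⟩
  choose y hy using hcol
  refine ⟨(of y)ᵀ, ext fun i j => ?_⟩
  exact congrFun (hy j) i

theorem transpose_mul_mulVec_eq_zero_of_mul_transpose_mul_eq {A Y : Matrix m k R}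
    (hY : A * Aᵀ * Y = A) {c : k → R} (hc : A *ᵥ c = 0) : (Aᵀ * Y) *ᵥ c = 0 := by
  have h : (A * Aᵀ) *ᵥ (Y *ᵥ c) = 0 := by rw [mulVec_mulVec, hY, hc]
  have hker := (SetLike.ext_iff.1 (ker_mulVecLin_transpose_mul_self Aᵀ) (Y *ᵥ c)).1
  simp only [LinearMap.mem_ker, mulVecLin_apply, transpose_transpose] at hker
  rw [← mulVec_mulVec]
  exact hker h

theorem mem_closure_ratCast_ker (A : Matrix m k ℚ) {c : k → ℝ} (hc : A.map (↑) *ᵥ c = 0) :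
    c ∈ closure ((fun x j => (x j : ℝ)) '' {x : k → ℚ | A *ᵥ x = 0}) := by
  obtain ⟨Y, hY⟩ := exists_mul_transpose_mul_eq A
  let φ := Rat.castHom ℝ
  have hYℝ : A.map φ * (A.map φ)ᵀ * Y.map φ = A.map φ := by
    rw [← transpose_map, ← Matrix.map_mul, ← Matrix.map_mul, hY]
  -- `v ↦ v - Aᵀ Y v` is a rational projection onto the kernel of `A`, over `ℝ` as over `ℚ`
  let P : (k → ℝ) → (k → ℝ) := fun v => v - (Aᵀ * Y).map φ *ᵥ v
  have hPc : P c = c := by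
    simp only [P, Matrix.map_mul, transpose_map, sub_zero,
      transpose_mul_mulVec_eq_zero_of_mul_transpose_mul_eq hYℝ hc]
  rw [← hPc]
  have hdense : DenseRange fun (r : k → ℚ) j => (r j : ℝ) :=
    DenseRange.piMap fun _ => Rat.denseRange_cast
  refine map_mem_closure (by fun_prop) (hdense c) ?_
  rintro _ ⟨r, rfl⟩
  refine ⟨r - (Aᵀ * Y) *ᵥ r, ?_, ?_⟩
  · simp [mulVec_sub, mulVec_mulVec, ← Matrix.mul_assoc, hY]
  · ext j
    simp only [P, Pi.sub_apply, Rat.cast_sub]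
    congr 1
    exact RingHom.map_mulVec φ _ r j

end Matrix

open Filter Topology in
theorem eventually_sign_eq_of_ne_zero {ι α : Type*} [Finite ι] [Zero α] [TopologicalSpace α]
    [LinearOrder α] [OrderTopology α] (y : ι → α) :
    ∀ᶠ v in 𝓝 y, ∀ i, y i ≠ 0 → SignType.sign (v i) = SignType.sign (y i) := by
  refine eventually_all.2 fun i => ?_
  by_cases hi : y i = 0
  · exact .of_forall fun _ h => absurd hi h
  · have hcont : ContinuousAt (fun v : ι → α => SignType.sign (v i)) y :=
      ContinuousAt.comp (f := fun v : ι → α => v i) (continuousAt_sign_of_ne_zero hi)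
        (continuous_apply i).continuousAt
    exact (hcont.eventually_mem ((isOpen_discrete {SignType.sign (y i)}).mem_nhds rfl)).mono
      fun _ h _ => h

theorem stmt_1_general {n k : ℕ} (L : Submodule ℝ (Fin n → ℝ))
    (B : Matrix (Fin n) (Fin k) ℝ)
    (hrat : ∀ j, IsRationalVec (fun i => B i j))
    (hspan : Submodule.span ℝ (Set.range (fun j => fun i => B i j)) = L)
    (s : Fin n → SignType) (hs : s ∈ signSet L) :
    ∃ x : Fin k → ℚ, signVec (B.mulVec (fun j => (x j : ℝ))) = s := by
  obtain ⟨y, hyL, rfl⟩ := hs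
  obtain ⟨c, rfl⟩ : ∃ c, B *ᵥ c = y := by
    have hy : y ∈ LinearMap.range B.mulVecLin := by
      rw [range_mulVecLin]
      exact hspan ▸ hyL
    exact hy
  choose Bq hBq using hrat
  set Q : Matrix (Fin n) (Fin k) ℚ := of fun i j => Bq j i
  have hQ : Q.map (↑) = B := ext fun i j => (hBq j i).symm
  have hBx : ∀ x : Fin k → ℚ, B *ᵥ (fun j => (x j : ℝ)) = fun i => ((Q *ᵥ x) i : ℝ) :=
    fun x => hQ ▸ funext fun i => (RingHom.map_mulVec (Rat.castHom ℝ) Q x i).symm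
  set A : Matrix {i // (B *ᵥ c) i = 0} (Fin k) ℚ := Q.submatrix Subtype.val id
  have hAc : A.map (↑) *ᵥ c = 0 := by
    ext i
    change (Q.map (↑) *ᵥ c) i.1 = 0
    rw [hQ]
    exact i.2
  obtain ⟨_, hx, ⟨x, hAx, rfl⟩⟩ := mem_closure_iff_nhds.1 (A.mem_closure_ratCast_ker hAc) _
    ((Continuous.continuousAt (by fun_prop)).preimage_mem_nhds
      (eventually_sign_eq_of_ne_zero (B *ᵥ c)))
  refine ⟨x, funext fun i => ?_⟩
  by_cases hi : (B *ᵥ c) i = 0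
  · have hQx : (Q *ᵥ x) i = 0 := congrFun hAx ⟨i, hi⟩
    simp only [signVec, hi, hBx, hQx, Rat.cast_zero]
  · exact hx i hi

theorem stmt_1 {n k : ℕ} (L : Submodule ℝ (Fin n → ℝ))
    (B : Matrix (Fin n) (Fin k) ℝ)
    (hrat : ∀ j, IsRationalVec (fun i => B i j))
    (hind : LinearIndependent ℝ (fun j => fun i => B i j))
    (hspan : Submodule.span ℝ (Set.range (fun j => fun i => B i j)) = L)
    (s : Fin n → SignType) (hs : s ∈ signSet L) :
    ∃ x : Fin k → ℚ, signVec (B.mulVec (fun j => (x j : ℝ))) = s :=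
  stmt_1_general L B hrat hspan s hs
end
end

section
/- For every subspace L ⊆ ℝ^n with dim(L) = 2, there exists a rational subspace K ⊆ ℝ^n with dim(K) = 2 and sign(K) = sign(L). -/
open Matrix

noncomputable section

/-!
Write `L = span {u, v}`, so that the `i`-th coordinate of a vector of `L` is `a * u i + b * v i`.
For `a ≠ 0` and `v i ≠ 0` its sign is `sign (a * v i) * sign (u i / v i - t)` with `t = -b / a`,
so the sign vectors of `L` only depend on the signs of the `v i`, the signs of the `u i` with
`v i = 0`, and the order of the slopes `u i / v i`: an order-preserving relabelling of finitely many
reals preserves every threshold pattern `i ↦ sign (τ i - t)`. Replacing each slope by its rank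
among all slopes yields integer vectors `u'`, `v'` with the same data, and a nonzero `2 × 2` minor
of `(u, v)` stays nonzero, so `u'`, `v'` remain independent.
-/

open Finset Submodule Module

theorem sign_coe_signType {α : Type*} [Ring α] [LinearOrder α] [IsStrictOrderedRing α]
    (s : SignType) : SignType.sign (s : α) = s := by
  cases s <;> simp

theorem SignType.ratCast_cast {α : Type*} [DivisionRing α] (s : SignType) : ((s : ℚ) : α) = s := by
  cases s <;> simp

theorem sign_sub_eq_sign_sub_of_lt_iff {α : Type*} [Ring α] [LinearOrder α]
    [IsStrictOrderedRing α] {a b c d : α}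
    (h₁ : a < b ↔ c < d) (h₂ : b < a ↔ d < c) : SignType.sign (a - b) = SignType.sign (c - d) := by
  rcases lt_trichotomy a b with h | rfl | h
  · rw [sign_neg (sub_neg.2 h), sign_neg (sub_neg.2 (h₁.1 h))]
  · rw [sub_self, sign_zero, eq_comm, sign_eq_zero_iff, sub_eq_zero]
    exact le_antisymm (not_lt.1 (mt h₂.2 (lt_irrefl a))) (not_lt.1 (mt h₁.2 (lt_irrefl a)))
  · rw [sign_pos (sub_pos.2 h), sign_pos (sub_pos.2 (h₂.1 h))]

theorem card_filter_lt_lt_card_filter_lt_iff {ι α : Type*} [Fintype ι] [LinearOrder α]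
    (f : ι → α) {i j : ι} : #{k | f k < f i} < #{k | f k < f j} ↔ f i < f j := by
  constructor
  · contrapose!
    intro hji
    exact card_le_card fun k hk => by grind
  · intro hij
    refine card_lt_card ⟨fun k hk => by grind, fun hsub => ?_⟩
    simpa using hsub (by simpa using hij : i ∈ ({k | f k < f j} : Finset ι))

theorem exists_sign_sub_eq_of_lt_iff {ι : Type*} [Finite ι] {τ q : ι → ℝ}
    (h : ∀ i j, τ i < τ j ↔ q i < q j) (t : ℝ) :
    ∃ s, ∀ i, SignType.sign (τ i - t) = SignType.sign (q i - s) := by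
  classical
  have := Fintype.ofFinite ι
  by_cases ht : ∃ k, τ k = t
  · obtain ⟨k, rfl⟩ := ht
    exact ⟨q k, fun i => sign_sub_eq_sign_sub_of_lt_iff (h i k) (h k i)⟩
  push Not at ht
  obtain ⟨s, hlo, hhi⟩ := Order.exists_between_finsets
    (({i | τ i < t} : Finset ι).image q) (({i | t < τ i} : Finset ι).image q) (by
      simp only [mem_image, mem_filter, mem_univ, true_and]
      rintro _ ⟨i, hi, rfl⟩ _ ⟨j, hj, rfl⟩
      exact (h i j).1 (hi.trans hj))
  have hlo' : ∀ i, τ i < t → q i < s := fun i hi => hlo _ (mem_image_of_mem q (by simpa using hi))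
  have hhi' : ∀ i, t < τ i → s < q i := fun i hi => hhi _ (mem_image_of_mem q (by simpa using hi))
  refine ⟨s, fun i => sign_sub_eq_sign_sub_of_lt_iff ⟨hlo' i, fun hq => ?_⟩ ⟨hhi' i, fun hq => ?_⟩⟩
  · by_contra! hti
    exact lt_asymm hq (hhi' i (hti.lt_of_ne' (ht i)))
  · by_contra! hti
    exact lt_asymm hq (hlo' i (hti.lt_of_ne (ht i)))

theorem linearIndependent_pair_iff_exists_mul_sub_mul_ne_zero {K ι : Type*} [Field K]
    (u v : ι → K) : LinearIndependent K ![u, v] ↔ ∃ i j, u i * v j - u j * v i ≠ 0 := by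
  rw [LinearIndependent.pair_iff]
  constructor
  · contrapose!
    intro h0
    by_cases hu : u = 0
    · exact ⟨1, 0, by simp [hu], by simp⟩
    obtain ⟨k, hk⟩ := Function.ne_iff.1 hu
    refine ⟨-v k, u k, funext fun i => ?_, fun _ => hk⟩
    simp only [Pi.add_apply, Pi.smul_apply, smul_eq_mul, Pi.zero_apply]
    linear_combination h0 k i
  · rintro ⟨i, j, hij⟩ s t hst
    have hi : s * u i + t * v i = 0 := by simpa using congrFun hst i
    have hj : s * u j + t * v j = 0 := by simpa using congrFun hst j
    refine ⟨(mul_eq_zero.1 ?_).resolve_right hij, (mul_eq_zero.1 ?_).resolve_right hij⟩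
    · linear_combination v j * hi - v i * hj
    · linear_combination u i * hj - u j * hi

theorem finrank_span_pair {K V : Type*} [DivisionRing K] [AddCommGroup V] [Module K V] {u v : V}
    (huv : LinearIndependent K ![u, v]) : finrank K (span K {u, v}) = 2 := by
  have := finrank_span_eq_card huv
  rwa [Matrix.range_cons_cons_empty, Fintype.card_fin] at this

theorem exists_linearIndependent_pair_span_eq {K V : Type*} [DivisionRing K] [AddCommGroup V]
    [Module K V] {L : Submodule K V} (hL : finrank K L = 2) :
    ∃ u v : V, LinearIndependent K ![u, v] ∧ span K {u, v} = L := by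
  have := Module.finite_of_finrank_eq_succ hL
  let b := Module.finBasisOfFinrankEq K L hL
  have hb := b.linearIndependent.map' L.subtype L.ker_subtype
  rw [show L.subtype ∘ b = ![(b 0 : V), b 1] by ext i; fin_cases i <;> rfl] at hb
  refine ⟨(b 0 : V), b 1, hb, eq_of_le_of_finrank_eq ?_ (by rw [finrank_span_pair hb, hL])⟩
  simp [span_le, Set.insert_subset_iff]

structure SlopeEquivalent {ι : Type*} (u v u' v' : ι → ℝ) : Prop where
  sign_snd : ∀ i, SignType.sign (v i) = SignType.sign (v' i)
  sign_fst : ∀ i, v i = 0 → SignType.sign (u i) = SignType.sign (u' i)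
  slope_lt_iff : ∀ i j, v i ≠ 0 → v j ≠ 0 → (u i / v i < u j / v j ↔ u' i / v' i < u' j / v' j)

namespace SlopeEquivalent

variable {ι : Type*} {u v u' v' : ι → ℝ}

theorem snd_eq_zero_iff (h : SlopeEquivalent u v u' v') (i : ι) : v i = 0 ↔ v' i = 0 := by
  rw [← sign_eq_zero_iff, h.sign_snd, sign_eq_zero_iff]

theorem symm (h : SlopeEquivalent u v u' v') : SlopeEquivalent u' v' u v where
  sign_snd i := (h.sign_snd i).symm
  sign_fst i hi := (h.sign_fst i ((h.snd_eq_zero_iff i).2 hi)).symm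
  slope_lt_iff i j hi hj :=
    (h.slope_lt_iff i j (mt (h.snd_eq_zero_iff i).1 hi) (mt (h.snd_eq_zero_iff j).1 hj)).symm

theorem mul_sub_mul_ne_zero (h : SlopeEquivalent u v u' v') {i j : ι}
    (hij : u i * v j - u j * v i ≠ 0) : u' i * v' j - u' j * v' i ≠ 0 := by
  have hu : ∀ k, v k = 0 → u k ≠ 0 → u' k ≠ 0 := fun k hk huk => by
    rwa [← sign_ne_zero, ← h.sign_fst k hk, sign_ne_zero]
  have hv : ∀ k, v k ≠ 0 → v' k ≠ 0 := fun k => mt (h.snd_eq_zero_iff k).2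
  by_cases hi : v i = 0 <;> by_cases hj : v j = 0
  · simp [hi, hj] at hij
  · have hi' := (h.snd_eq_zero_iff i).1 hi
    simp only [hi, hi', mul_zero, sub_zero] at hij ⊢
    exact mul_ne_zero (hu i hi (left_ne_zero_of_mul hij)) (hv j hj)
  · have hj' := (h.snd_eq_zero_iff j).1 hj
    simp only [hj, hj', zero_sub, mul_zero, neg_ne_zero] at hij ⊢
    exact mul_ne_zero (hu j hj (left_ne_zero_of_mul hij)) (hv i hi)
  · have hslope : u i / v i ≠ u j / v j := fun heq => hij (by field_simp at heq; linarith)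
    have hslope' : u' i / v' i ≠ u' j / v' j := fun heq => hslope <|
      le_antisymm (not_lt.1 fun hlt => heq.not_gt ((h.slope_lt_iff j i hj hi).1 hlt))
        (not_lt.1 fun hlt => heq.not_lt ((h.slope_lt_iff i j hi hj).1 hlt))
    intro heq
    apply hslope'
    field_simp [hv i hi, hv j hj]
    linarith

theorem linearIndependent (h : SlopeEquivalent u v u' v') (huv : LinearIndependent ℝ ![u, v]) :
    LinearIndependent ℝ ![u', v'] := by
  obtain ⟨i, j, hij⟩ := (linearIndependent_pair_iff_exists_mul_sub_mul_ne_zero u v).1 huv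
  exact (linearIndependent_pair_iff_exists_mul_sub_mul_ne_zero u' v').2
    ⟨i, j, h.mul_sub_mul_ne_zero hij⟩

theorem exists_sign_eq [Finite ι] (h : SlopeEquivalent u v u' v') (a b : ℝ) :
    ∃ a' b', ∀ i, SignType.sign (a * u i + b * v i) = SignType.sign (a' * u' i + b' * v' i) := by
  by_cases ha : a = 0
  · exact ⟨0, b, fun i => by simp [ha, sign_mul, h.sign_snd i]⟩
  have hv : ∀ k, v k ≠ 0 → v' k ≠ 0 := fun k => mt (h.snd_eq_zero_iff k).2
  obtain ⟨s, hs⟩ := exists_sign_sub_eq_of_lt_iff (τ := fun k : {k // v k ≠ 0} => u k / v k)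
    (q := fun k => u' k / v' k) (fun k l => h.slope_lt_iff k l k.2 l.2) (-b / a)
  refine ⟨a, -a * s, fun i => ?_⟩
  by_cases hi : v i = 0
  · simp [hi, (h.snd_eq_zero_iff i).1 hi, sign_mul, h.sign_fst i hi]
  calc SignType.sign (a * u i + b * v i)
      = SignType.sign (a * v i * (u i / v i - -b / a)) := by congr 1; field_simp; ring
    _ = SignType.sign (a * v' i * (u' i / v' i - s)) := by
        rw [sign_mul, sign_mul, sign_mul, sign_mul, h.sign_snd i, hs ⟨i, hi⟩]
    _ = SignType.sign (a * u' i + -a * s * v' i) := by congr 1; field_simp [hv i hi]; ring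

end SlopeEquivalent

theorem signSet_span_pair {n : ℕ} (u v : Fin n → ℝ) :
    signSet (span ℝ {u, v}) =
      Set.range fun z : ℝ × ℝ => fun i => SignType.sign (z.1 * u i + z.2 * v i) := by
  ext X
  simp only [signSet, Set.mem_image, Set.mem_range, SetLike.mem_coe, mem_span_pair, Prod.exists]
  constructor
  · rintro ⟨_, ⟨a, b, rfl⟩, rfl⟩
    exact ⟨a, b, rfl⟩
  · rintro ⟨a, b, rfl⟩
    exact ⟨_, ⟨a, b, rfl⟩, rfl⟩

theorem SlopeEquivalent.signSet_span_pair_eq {n : ℕ} {u v u' v' : Fin n → ℝ}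
    (h : SlopeEquivalent u v u' v') : signSet (span ℝ {u, v}) = signSet (span ℝ {u', v'}) := by
  suffices ∀ {u v u' v' : Fin n → ℝ}, SlopeEquivalent u v u' v' →
      signSet (span ℝ {u, v}) ⊆ signSet (span ℝ {u', v'}) from
    (this h).antisymm (this h.symm)
  intro u v u' v' h
  rw [signSet_span_pair, signSet_span_pair]
  rintro _ ⟨⟨a, b⟩, rfl⟩
  obtain ⟨a', b', hab⟩ := h.exists_sign_eq a b
  exact ⟨(a', b'), funext fun i => (hab i).symm⟩

theorem exists_rational_slopeEquivalent {n : ℕ} (u v : Fin n → ℝ) :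
    ∃ u' v', IsRationalVec u' ∧ IsRationalVec v' ∧ SlopeEquivalent u v u' v' := by
  classical
  let r : Fin n → ℕ := fun i => #{k | u k / v k < u i / v i}
  let u' : Fin n → ℝ := fun i =>
    if v i = 0 then (SignType.sign (u i) : ℝ) else SignType.sign (v i) * r i
  let v' : Fin n → ℝ := fun i => SignType.sign (v i)
  have hslope : ∀ i, v i ≠ 0 → u' i / v' i = r i := fun i hi => by
    simp only [u', v', if_neg hi]
    exact mul_div_cancel_left₀ _ (by rcases hi.lt_or_gt with h | h <;> simp [h])
  refine ⟨u', v', fun i => ?_, fun i => ⟨SignType.sign (v i), (SignType.ratCast_cast _).symm⟩, ?_⟩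
  · refine ⟨if v i = 0 then (SignType.sign (u i) : ℚ) else SignType.sign (v i) * r i, ?_⟩
    by_cases hi : v i = 0 <;> simp [u', hi, SignType.ratCast_cast]
  refine ⟨fun i => (sign_coe_signType _).symm, fun i hi => ?_, fun i j hi hj => ?_⟩
  · simp [u', hi, sign_coe_signType]
  · rw [hslope i hi, hslope j hj, Nat.cast_lt, card_filter_lt_lt_card_filter_lt_iff]

theorem stmt_2 {n : ℕ} (L : Submodule ℝ (Fin n → ℝ)) (hL : Module.finrank ℝ L = 2) :
    ∃ K : Submodule ℝ (Fin n → ℝ), IsRationalSubspace K ∧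
      Module.finrank ℝ K = 2 ∧ signSet K = signSet L := by
  obtain ⟨u, v, huv, rfl⟩ := exists_linearIndependent_pair_span_eq hL
  obtain ⟨u', v', hu', hv', h⟩ := exists_rational_slopeEquivalent u v
  refine ⟨span ℝ {u', v'}, ⟨{u', v'}, ?_, rfl⟩, finrank_span_pair (h.linearIndependent huv),
    h.signSet_span_pair_eq.symm⟩
  rintro w (rfl | rfl) <;> assumption
end
end

section
/- For every m×n sign pattern matrix A with minimum rank n-2, there exists a rational matrix in the qualitative class Q(A) whose rank equals n-2. -/
open Matrix

noncomputable section

/-!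
Take `B₀ ∈ Q(A)` of rank `n - 2` and a basis `u, v` of its kernel. Row `i` of `B₀` is a linear
dependence among the planar vectors `sign (A i j) • p j`, `p j = (u j, v j)`, with positive
coefficients on their support. Whether such a dependence exists is decided by the oriented
matroid of `p` (orientations of pairs and relative directions of collinear pairs): it exists iff
every nonzero vector lies in an antiparallel pair or in a triangle around the origin. Planar
oriented matroids are realisable over `ℚ`: writing `p j = x j • (1, m j)` in a generic frame, the
vectors `sign (x j) • (1, rank of m j)` have the same one. Rational positive dependencies of
these, row by row, give a rational `B ∈ Q(A)` with two independent rational kernel vectors, so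
`rank B ≤ n - 2 = mr A ≤ rank B`.
-/

open Finset SignType

section Plane

variable {α : Type*}

def det2 [CommRing α] (u v : α × α) : α := u.1 * v.2 - u.2 * v.1

def dot2 [CommRing α] (u v : α × α) : α := u.1 * v.1 + u.2 * v.2

section CommRing

variable [CommRing α]

@[simp]
lemma det2_self (u : α × α) : det2 u u = 0 := by
  simp only [det2]; ring

lemma det2_comm (u v : α × α) : det2 v u = -det2 u v := by
  simp only [det2]; ring

@[simp]
lemma det2_zero_right (u : α × α) : det2 u 0 = 0 := by simp [det2]

@[simp]
lemma dot2_zero_right (u : α × α) : dot2 u 0 = 0 := by simp [dot2]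

lemma det2_smul_left (c : α) (u v : α × α) : det2 (c • u) v = c * det2 u v := by
  simp only [det2, Prod.smul_fst, Prod.smul_snd, smul_eq_mul]; ring

lemma det2_smul_right (c : α) (u v : α × α) : det2 u (c • v) = c * det2 u v := by
  simp only [det2, Prod.smul_fst, Prod.smul_snd, smul_eq_mul]; ring

lemma dot2_smul_left (c : α) (u v : α × α) : dot2 (c • u) v = c * dot2 u v := by
  simp only [dot2, Prod.smul_fst, Prod.smul_snd, smul_eq_mul]; ring

lemma dot2_smul_right (c : α) (u v : α × α) : dot2 u (c • v) = c * dot2 u v := by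
  simp only [dot2, Prod.smul_fst, Prod.smul_snd, smul_eq_mul]; ring

lemma det2_sum_smul_right {ι : Type*} (s : Finset ι) (u : α × α) (c : ι → α) (w : ι → α × α) :
    det2 u (∑ i ∈ s, c i • w i) = ∑ i ∈ s, c i * det2 u (w i) := by
  simp only [det2, Prod.fst_sum, Prod.snd_sum, Prod.smul_fst, Prod.smul_snd, smul_eq_mul,
    mul_sum, ← sum_sub_distrib]
  exact sum_congr rfl fun _ _ => by ring

lemma dot2_sum_smul_right {ι : Type*} (s : Finset ι) (u : α × α) (c : ι → α) (w : ι → α × α) :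
    dot2 u (∑ i ∈ s, c i • w i) = ∑ i ∈ s, c i * dot2 u (w i) := by
  simp only [dot2, Prod.fst_sum, Prod.snd_sum, Prod.smul_fst, Prod.smul_snd, smul_eq_mul,
    mul_sum, ← sum_add_distrib]
  exact sum_congr rfl fun _ _ => by ring

lemma det2_smul_add_det2_smul_add_det2_smul (x y z : α × α) :
    det2 y z • x + det2 z x • y + det2 x y • z = 0 := by
  ext <;> simp only [det2, Prod.fst_add, Prod.snd_add, Prod.smul_fst, Prod.smul_snd, smul_eq_mul,
    Prod.fst_zero, Prod.snd_zero] <;> ring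

lemma dot2_smul_sub_dot2_smul_of_det2_eq_zero {x y : α × α} (h : det2 x y = 0) :
    dot2 x x • y - dot2 x y • x = 0 := by
  simp only [det2] at h
  ext <;> simp only [dot2, Prod.fst_sub, Prod.snd_sub, Prod.smul_fst, Prod.smul_snd, smul_eq_mul,
    Prod.fst_zero, Prod.snd_zero]
  · linear_combination -x.2 * h
  · linear_combination x.1 * h

lemma dot2_self_mul_det2 (a b c : α × α) :
    dot2 a a * det2 c b = dot2 a b * det2 c a + det2 a b * dot2 c a := by
  simp only [dot2, det2]; ring

lemma dot2_mul_det2_sub_det2_mul_dot2 (e x y : α × α) :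
    dot2 e x * det2 e y - det2 e x * dot2 e y = dot2 e e * det2 x y := by
  simp only [dot2, det2]; ring

lemma dot2_mul_dot2_add_det2_mul_det2 (e x y : α × α) :
    dot2 e x * dot2 e y + det2 e x * det2 e y = dot2 e e * dot2 x y := by
  simp only [dot2, det2]; ring

end CommRing

variable [CommRing α] [LinearOrder α] [IsStrictOrderedRing α]

lemma dot2_self_pos {u : α × α} (h : u ≠ 0) : 0 < dot2 u u := by
  obtain ⟨a, b⟩ := u
  have hab : a ≠ 0 ∨ b ≠ 0 := by
    by_contra! h'
    exact h (by simp [h'.1, h'.2])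
  simp only [dot2]
  rcases hab with ha | hb
  · exact add_pos_of_pos_of_nonneg (mul_self_pos.2 ha) (mul_self_nonneg b)
  · exact add_pos_of_nonneg_of_pos (mul_self_nonneg a) (mul_self_pos.2 hb)

@[simp]
lemma dot2_self_eq_zero {u : α × α} : dot2 u u = 0 ↔ u = 0 :=
  ⟨fun h => by_contra fun hu => (dot2_self_pos hu).ne' h, fun h => by simp [h]⟩

end Plane

lemma sign_signType_cast {α : Type*} [Ring α] [LinearOrder α] [IsStrictOrderedRing α]
    (s : SignType) : sign (s : α) = s := by
  cases s <;> simp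

section OrientedMatroid

variable {ι α β : Type*} [CommRing α] [LinearOrder α] [IsStrictOrderedRing α]
  [CommRing β] [LinearOrder β] [IsStrictOrderedRing β]

/-- Same chirotope, and the same relative direction on every collinear pair: the data that decides
which sign patterns are carried by linear dependencies with positive coefficients. -/
structure SameOrientedMatroid (p : ι → α × α) (q : ι → β × β) : Prop where
  sign_det2 : ∀ s t, sign (det2 (p s) (p t)) = sign (det2 (q s) (q t))
  sign_dot2 : ∀ s t, det2 (p s) (p t) = 0 → sign (dot2 (p s) (p t)) = sign (dot2 (q s) (q t))

namespace SameOrientedMatroid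

variable {p : ι → α × α} {q : ι → β × β}

lemma eq_zero_iff (h : SameOrientedMatroid p q) (i : ι) : p i = 0 ↔ q i = 0 := by
  rw [← dot2_self_eq_zero (u := p i), ← dot2_self_eq_zero (u := q i), ← sign_eq_zero_iff,
    h.sign_dot2 i i (det2_self _), sign_eq_zero_iff]

lemma signType_smul (h : SameOrientedMatroid p q) (σ : ι → SignType) :
    SameOrientedMatroid (fun i => (σ i : α) • p i) (fun i => (σ i : β) • q i) where
  sign_det2 s t := by
    simp only [det2_smul_left, det2_smul_right, sign_mul, sign_signType_cast, h.sign_det2 s t]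
  sign_dot2 s t hst := by
    simp only [dot2_smul_left, dot2_smul_right, sign_mul, sign_signType_cast]
    rw [det2_smul_left, det2_smul_right] at hst
    rcases mul_eq_zero.1 hst with hs | hst
    · have hσ : σ s = 0 := by rw [← sign_signType_cast (α := α) (σ s), hs, sign_zero]
      simp [hσ]
    rcases mul_eq_zero.1 hst with ht | hst
    · have hσ : σ t = 0 := by rw [← sign_signType_cast (α := α) (σ t), ht, sign_zero]
      simp [hσ]
    · rw [h.sign_dot2 s t hst]

end SameOrientedMatroid

end OrientedMatroid

lemma card_filter_lt_lt_card_filter_lt {ι α : Type*} [Fintype ι] [Preorder α] [DecidableLT α]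
    {f : ι → α} {s t : ι} (h : f s < f t) : #{k | f k < f s} < #{k | f k < f t} := by
  refine card_lt_card ((ssubset_iff_of_subset fun k hk => ?_).2 ⟨s, ?_, ?_⟩) <;>
    simp_all only [mem_filter, mem_univ, true_and, lt_irrefl, not_false_eq_true]
  exact hk.trans h

lemma sign_card_filter_lt_sub {ι α β : Type*} [Fintype ι] [AddCommGroup α] [LinearOrder α]
    [IsOrderedAddMonoid α] [Ring β] [LinearOrder β] [IsStrictOrderedRing β] (f : ι → α) (s t : ι) :
    sign ((#{k | f k < f t} : β) - #{k | f k < f s}) = sign (f t - f s) := by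
  rcases lt_trichotomy (f s) (f t) with h | h | h
  · have hr : (#{k | f k < f s} : β) < #{k | f k < f t} :=
      Nat.cast_lt.2 (card_filter_lt_lt_card_filter_lt h)
    rw [sign_pos (sub_pos.2 h), sign_pos (sub_pos.2 hr)]
  · simp [h]
  · have hr : (#{k | f k < f t} : β) < #{k | f k < f s} :=
      Nat.cast_lt.2 (card_filter_lt_lt_card_filter_lt h)
    rw [sign_neg (sub_neg.2 h), sign_neg (sub_neg.2 hr)]

section Realization

variable {ι α β : Type*} [Fintype ι] [Field α] [LinearOrder α] [IsStrictOrderedRing α]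
  [CommRing β] [LinearOrder β] [IsStrictOrderedRing β]

lemma exists_dot2_one_ne_zero (p : ι → α × α) :
    ∃ c : α, ∀ i, p i ≠ 0 → dot2 (1, c) (p i) ≠ 0 := by
  classical
  obtain ⟨c, hc⟩ := Infinite.exists_notMem_finset (univ.image fun i => -(p i).1 / (p i).2)
  refine ⟨c, fun i hi hdot => ?_⟩
  simp only [dot2, one_mul] at hdot
  by_cases h2 : (p i).2 = 0
  · exact hi (Prod.ext (by simpa [h2] using hdot) h2)
  · exact hc (mem_image.2 ⟨i, mem_univ _, by field_simp; linarith⟩)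

theorem exists_sameOrientedMatroid (p : ι → α × α) :
    ∃ q : ι → β × β, SameOrientedMatroid p q := by
  classical
  -- In the frame of `e`, each nonzero `p i` is `x i • (1, m i)` with `x i ≠ 0`; the slopes `m i`
  -- only matter through their order, so they can be replaced by their ranks `r i`.
  obtain ⟨c, hc⟩ := exists_dot2_one_ne_zero p
  set e : α × α := (1, c)
  set x : ι → α := fun i => dot2 e (p i)
  set m : ι → α := fun i => det2 e (p i) / x i
  set r : ι → β := fun i => (#{k | m k < m i} : β)
  have he : 0 < dot2 e e := dot2_self_pos (by simp [e])
  have hy : ∀ i, det2 e (p i) = m i * x i := fun i => by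
    by_cases hp : p i = 0
    · simp [x, hp]
    · exact (div_mul_cancel₀ _ (hc i hp)).symm
  have hdet : ∀ s t, dot2 e e * det2 (p s) (p t) = x s * x t * (m t - m s) := fun s t => by
    rw [← dot2_mul_det2_sub_det2_mul_dot2, hy, hy]; ring
  have hdot : ∀ s t, dot2 e e * dot2 (p s) (p t) = x s * x t * (1 + m s * m t) := fun s t => by
    rw [← dot2_mul_dot2_add_det2_mul_det2, hy, hy]; ring
  have hsign : ∀ a : α, sign (dot2 e e * a) = sign a := fun a => by
    rw [sign_mul, sign_pos he, one_mul]
  refine ⟨fun i => (sign (x i) : β) • (1, r i), ⟨fun s t => ?_, fun s t hst => ?_⟩⟩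
  · have hq : det2 ((sign (x s) : β) • (1, r s)) ((sign (x t) : β) • (1, r t)) =
        sign (x s) * sign (x t) * (r t - r s) := by
      simp only [det2, Prod.smul_mk, smul_eq_mul]; ring
    rw [← hsign, hdet, hq, sign_mul, sign_mul, sign_mul, sign_mul, sign_signType_cast,
      sign_signType_cast, sign_card_filter_lt_sub]
  · have hq : dot2 ((sign (x s) : β) • (1, r s)) ((sign (x t) : β) • (1, r t)) =
        sign (x s) * sign (x t) * (1 + r s * r t) := by
      simp only [dot2, Prod.smul_mk, smul_eq_mul]; ring
    rw [← hsign, hdot, hq]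
    have hst' := hdet s t
    rw [hst, mul_zero, eq_comm, mul_eq_zero, sub_eq_zero] at hst'
    rcases hst' with hx | hm
    · have hσ : (sign (x s) : β) * sign (x t) = 0 := by
        rw [← SignType.coe_mul, ← sign_mul, hx, sign_zero, SignType.coe_zero]
      rw [hx, hσ, zero_mul, zero_mul, sign_zero, sign_zero]
    · have hr : r t = r s := by simp only [r, hm]
      rw [hm, hr, sign_mul, sign_mul, sign_mul, sign_mul, sign_signType_cast, sign_signType_cast,
        sign_pos (add_pos_of_pos_of_nonneg one_pos (mul_self_nonneg (m s))),
        sign_pos (add_pos_of_pos_of_nonneg one_pos (mul_self_nonneg (r s)))]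

end Realization

lemma sum_single_smul {ι R M : Type*} [Fintype ι] [DecidableEq ι] [Semiring R] [AddCommMonoid M]
    [Module R M] (j : ι) (a : R) (v : ι → M) : ∑ i, (Pi.single j a : ι → R) i • v i = a • v j := by
  simp [Pi.single_apply, ite_smul]

section PositiveDependence

variable {ι α β : Type*} [Fintype ι] [Field α] [LinearOrder α] [IsStrictOrderedRing α]
  [CommRing β] [LinearOrder β] [IsStrictOrderedRing β]

/-- The two alternatives are the positive circuits through `w j`: an antiparallel pair, or a
triangle with the origin in its interior. -/
lemma exists_circuit_of_dependence {w : ι → α × α} {t : ι → α} (ht0 : ∀ i, 0 ≤ t i)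
    (ht : ∀ i, w i ≠ 0 → 0 < t i) (hsum : ∑ i, t i • w i = 0) {j : ι} (hj : w j ≠ 0) :
    (∃ k, det2 (w j) (w k) = 0 ∧ dot2 (w j) (w k) < 0) ∨
      ∃ k l, 0 < det2 (w j) (w k) ∧ 0 < det2 (w k) (w l) ∧ 0 < det2 (w l) (w j) := by
  by_contra! hno
  obtain ⟨hpar, htri⟩ := hno
  set a := w j
  have ha : 0 < dot2 a a := dot2_self_pos hj
  -- a linear form that is nonnegative on every `w i` and positive on `a` contradicts `hsum`
  have hsep : ∀ f : ι → α, (∀ i, 0 ≤ f i) → 0 < f j → ∑ i, t i * f i ≠ 0 := fun f hf hfj =>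
    (sum_pos' (fun i _ => mul_nonneg (ht0 i) (hf i)) ⟨j, mem_univ _, mul_pos (ht j hj) hfj⟩).ne'
  by_cases hH : ∃ k, 0 < det2 a (w k)
  · -- the vector `w k` of the upper half-plane making the largest angle with `a`
    obtain ⟨k, hk, hmin⟩ := exists_min_image {k | 0 < det2 a (w k)}
      (fun k => dot2 a (w k) / det2 a (w k)) (by simpa [Finset.Nonempty] using hH)
    rw [mem_filter] at hk
    refine hsep (fun i => -det2 (w k) (w i)) (fun i => ?_)
      (by rw [det2_comm, neg_neg]; exact hk.2) ?_
    · rw [neg_nonneg]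
      rcases lt_trichotomy (det2 a (w i)) 0 with hi | hi | hi
      · by_contra! hki
        have := htri k i hk.2 hki
        rw [det2_comm] at this
        linarith
      · have := dot2_self_mul_det2 a (w i) (w k)
        rw [hi, zero_mul, add_zero, det2_comm a (w k)] at this
        nlinarith [mul_nonneg (hpar i hi) hk.2.le]
      · have := hmin i (by simp [hi])
        rw [div_le_div_iff₀ hk.2 hi] at this
        nlinarith [dot2_mul_det2_sub_det2_mul_dot2 a (w k) (w i)]
    · simp only [mul_neg, sum_neg_distrib, neg_eq_zero]
      rw [← det2_sum_smul_right, hsum, det2_zero_right]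
  · simp only [not_exists, not_lt] at hH
    have hzero : ∀ i ∈ univ, t i * -det2 a (w i) = 0 := by
      refine (sum_eq_zero_iff_of_nonneg fun i _ => mul_nonneg (ht0 i) (by linarith [hH i])).1 ?_
      simp only [mul_neg, sum_neg_distrib, neg_eq_zero]
      rw [← det2_sum_smul_right, hsum, det2_zero_right]
    refine hsep (fun i => dot2 a (w i)) (fun i => ?_) ha ?_
    · by_cases hi : w i = 0
      · simp [hi]
      · have := hzero i (mem_univ _)
        rw [mul_neg, neg_eq_zero, mul_eq_zero] at this
        exact hpar i (this.resolve_left (ht i hi).ne')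
    · rw [← dot2_sum_smul_right, hsum, dot2_zero_right]

lemma SameOrientedMatroid.exists_nonneg_dependence {w : ι → α × α} {w' : ι → β × β}
    (h : SameOrientedMatroid w w') {t : ι → α} (ht0 : ∀ i, 0 ≤ t i) (ht : ∀ i, w i ≠ 0 → 0 < t i)
    (hsum : ∑ i, t i • w i = 0) (j : ι) :
    ∃ c : ι → β, 0 ≤ c ∧ 0 < c j ∧ ∑ i, c i • w' i = 0 := by
  classical
  by_cases hj : w j = 0
  · refine ⟨Pi.single j 1, Pi.single_nonneg.2 zero_le_one, by simp, ?_⟩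
    rw [sum_single_smul, one_smul, ← h.eq_zero_iff, hj]
  have pos_of_pos {x : α} {y : β} (hxy : sign x = sign y) (hx : 0 < x) : 0 < y := by
    rwa [← sign_eq_one_iff, ← hxy, sign_eq_one_iff]
  rcases exists_circuit_of_dependence ht0 ht hsum hj with ⟨k, hdet, hdot⟩ | ⟨k, l, hjk, hkl, hlj⟩
  · have hdet' : det2 (w' j) (w' k) = 0 := by
      rw [← sign_eq_zero_iff, ← h.sign_det2, hdet, sign_zero]
    have hdot' : dot2 (w' j) (w' k) < 0 := by
      rw [← sign_eq_neg_one_iff, ← h.sign_dot2 j k hdet, sign_eq_neg_one_iff.2 hdot]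
    have hjk : j ≠ k := by
      rintro rfl
      exact (dot2_self_pos hj).not_gt hdot
    have hj' : w' j ≠ 0 := (h.eq_zero_iff j).not.1 hj
    refine ⟨Pi.single j (-dot2 (w' j) (w' k)) + Pi.single k (dot2 (w' j) (w' j)),
      add_nonneg (Pi.single_nonneg.2 (by linarith)) (Pi.single_nonneg.2 (dot2_self_pos hj').le),
      ?_, ?_⟩
    · simp [hjk.symm, hdot']
    · simp only [Pi.add_apply, add_smul, sum_add_distrib, sum_single_smul, neg_smul,
        neg_add_eq_sub]
      exact dot2_smul_sub_dot2_smul_of_det2_eq_zero hdet'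
  · have hjk' := pos_of_pos (h.sign_det2 j k) hjk
    have hkl' := pos_of_pos (h.sign_det2 k l) hkl
    have hlj' := pos_of_pos (h.sign_det2 l j) hlj
    have hkj : k ≠ j := by rintro rfl; simp at hjk
    have hlj_ne : l ≠ j := by rintro rfl; simp at hlj
    refine ⟨Pi.single j (det2 (w' k) (w' l)) + Pi.single k (det2 (w' l) (w' j)) +
      Pi.single l (det2 (w' j) (w' k)), add_nonneg (add_nonneg
        (Pi.single_nonneg.2 hkl'.le) (Pi.single_nonneg.2 hlj'.le)) (Pi.single_nonneg.2 hjk'.le),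
      by simp [hkj, hlj_ne, hkl'], ?_⟩
    simp only [Pi.add_apply, add_smul, sum_add_distrib, sum_single_smul]
    exact det2_smul_add_det2_smul_add_det2_smul _ _ _

theorem SameOrientedMatroid.exists_pos_dependence {w : ι → α × α} {w' : ι → β × β}
    (h : SameOrientedMatroid w w') {t : ι → α} (ht0 : ∀ i, 0 ≤ t i) (ht : ∀ i, w i ≠ 0 → 0 < t i)
    (hsum : ∑ i, t i • w i = 0) : ∃ t' : ι → β, (∀ i, 0 < t' i) ∧ ∑ i, t' i • w' i = 0 := by
  choose c hc0 hcpos hcsum using h.exists_nonneg_dependence ht0 ht hsum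
  refine ⟨fun i => ∑ j, c j i, fun i => ?_, ?_⟩
  · exact (hcpos i).trans_le (single_le_sum (fun j _ => hc0 j i) (mem_univ i))
  · simp only [sum_smul]
    rw [sum_comm]
    exact sum_eq_zero fun j _ => hcsum j

theorem SameOrientedMatroid.exists_matrix_sign_eq {m : Type*} {p : ι → α × α} {q : ι → β × β}
    (h : SameOrientedMatroid p q) (B : Matrix m ι α)
    (hB : ∀ i, ∑ j, B i j • p j = 0) :
    ∃ B' : Matrix m ι β, (∀ i j, sign (B' i j) = sign (B i j)) ∧ ∀ i, ∑ j, B' i j • q j = 0 := by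
  have hrow : ∀ i, ∃ t : ι → β, (∀ j, 0 < t j) ∧ ∑ j, t j • ((sign (B i j) : β) • q j) = 0 := by
    intro i
    refine (h.signType_smul fun j => sign (B i j)).exists_pos_dependence
      (t := fun j => |B i j|) (fun j => abs_nonneg _) (fun j hj => abs_pos.2 ?_) ?_
    · rintro h0
      simp [h0] at hj
    · simpa only [smul_smul, abs_mul_sign] using hB i
  choose t ht hts using hrow
  refine ⟨Matrix.of fun i j => t i j * sign (B i j), fun i j => ?_, fun i => ?_⟩
  · rw [Matrix.of_apply, sign_mul, sign_pos (ht i j), sign_signType_cast, one_mul]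
  · simpa only [Matrix.of_apply, mul_smul] using hts i

end PositiveDependence

lemma linearIndependent_pair_iff_exists_det2_ne_zero {ι K : Type*} [Field K] {u v : ι → K} :
    LinearIndependent K ![u, v] ↔ ∃ s t, det2 (u s, v s) (u t, v t) ≠ 0 := by
  rw [LinearIndependent.pair_iff]
  constructor
  · intro h
    by_contra! hdet
    by_cases hu : u = 0
    · simpa using h 1 0 (by simp [hu])
    · obtain ⟨s, hs⟩ := Function.ne_iff.1 hu
      refine hs (neg_eq_zero.1 (h (v s) (-u s) (funext fun t => ?_)).2)
      have := hdet s t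
      simp only [det2] at this
      simp only [Pi.add_apply, Pi.smul_apply, smul_eq_mul, Pi.zero_apply]
      linear_combination -this
  · rintro ⟨s, t, hst⟩ a b hab
    have hs := congr_fun hab s
    have ht := congr_fun hab t
    simp only [Pi.add_apply, Pi.smul_apply, smul_eq_mul, Pi.zero_apply] at hs ht
    simp only [det2] at hst
    constructor
    · exact (mul_eq_zero.1 (by linear_combination v t * hs - v s * ht :
        a * (u s * v t - v s * u t) = 0)).resolve_right hst
    · exact (mul_eq_zero.1 (by linear_combination u s * ht - u t * hs :
        b * (u s * v t - v s * u t) = 0)).resolve_right hst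

section Matrix

variable {m n K : Type*} [Fintype n] [Field K]

lemma Matrix.eq_zero_of_rank_eq_zero [Fintype m] (B : Matrix m n K) (h : B.rank = 0) : B = 0 := by
  classical
  have hB : B.mulVecLin = 0 := LinearMap.range_eq_bot.1 (Submodule.finrank_eq_zero.1 h)
  ext i j
  simpa using congr_fun (LinearMap.congr_fun hB (Pi.single j 1)) i

lemma Matrix.rank_add_two_le_iff [Fintype m] (B : Matrix m n K) :
    B.rank + 2 ≤ Fintype.card n ↔
      ∃ u v : n → K, LinearIndependent K ![u, v] ∧ B *ᵥ u = 0 ∧ B *ᵥ v = 0 := by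
  have hrk := B.mulVecLin.finrank_range_add_finrank_ker
  rw [Module.finrank_fintype_fun_eq_card] at hrk
  rw [Matrix.rank, ← hrk, add_le_add_iff_left]
  constructor
  · intro h2
    obtain ⟨f, hf⟩ := exists_linearIndependent_of_le_finrank h2
    refine ⟨f 0, f 1, ?_, (f 0).2, (f 1).2⟩
    have hf' : ![((f 0 : LinearMap.ker B.mulVecLin) : n → K), f 1] =
        (LinearMap.ker B.mulVecLin).subtype ∘ f := by
      ext i : 1
      fin_cases i <;> rfl
    rw [hf']
    exact hf.map' _ (LinearMap.ker B.mulVecLin).ker_subtype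
  · rintro ⟨u, v, huv, hu, hv⟩
    have hspan : Submodule.span K (Set.range ![u, v]) ≤ LinearMap.ker B.mulVecLin := by
      rw [Submodule.span_le, Set.range_subset_iff]
      intro i
      fin_cases i <;> simpa
    calc 2 = Module.finrank K (Submodule.span K (Set.range ![u, v])) := by
          rw [finrank_span_eq_card huv]; simp
      _ ≤ _ := Submodule.finrank_mono hspan

lemma Matrix.mulVec_eq_zero_and_mulVec_eq_zero_iff {R : Type*} [CommRing R] (B : Matrix m n R)
    (u v : n → R) : B *ᵥ u = 0 ∧ B *ᵥ v = 0 ↔ ∀ i, ∑ j, B i j • (u j, v j) = 0 := by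
  simp only [funext_iff, Prod.ext_iff, Prod.fst_sum, Prod.snd_sum, Prod.smul_mk, mulVec,
    dotProduct, smul_eq_mul, Pi.zero_apply, Prod.fst_zero, Prod.snd_zero]
  exact forall_and.symm

lemma Matrix.rank_map_add_two_le {L : Type*} [Field L] [Fintype m] (B : Matrix m n K)
    (f : K →+* L) {q : n → K × K} (hB : ∀ i, ∑ j, B i j • q j = 0) {s t : n}
    (hst : det2 (q s) (q t) ≠ 0) : (B.map f).rank + 2 ≤ Fintype.card n := by
  obtain ⟨h₁, h₂⟩ := (B.mulVec_eq_zero_and_mulVec_eq_zero_iff _ _).2 hB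
  have hker : ∀ x : n → K, B *ᵥ x = 0 → B.map f *ᵥ (f ∘ x) = 0 := fun x hx =>
    funext fun i => by rw [← RingHom.map_mulVec, hx, Pi.zero_apply, map_zero, Pi.zero_apply]
  refine (B.map f).rank_add_two_le_iff.2 ⟨_, _, ?_, hker _ h₁, hker _ h₂⟩
  refine linearIndependent_pair_iff_exists_det2_ne_zero.2 ⟨s, t, ?_⟩
  simpa [det2] using (map_ne_zero f).2 hst

end Matrix

lemma sign_ratCast (x : ℚ) : sign (x : ℝ) = sign x :=
  StrictMono.sign_comp (f := Rat.castHom ℝ) Rat.cast_strictMono x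

lemma exists_rank_eq_mr {m n : ℕ} (A : Matrix (Fin m) (Fin n) SignType) :
    ∃ B : Matrix (Fin m) (Fin n) ℝ, (∀ i j, sign (B i j) = A i j) ∧ B.rank = mr A :=
  Nat.sInf_mem (s := {r | ∃ B : Matrix (Fin m) (Fin n) ℝ, (∀ i j, sign (B i j) = A i j) ∧
    B.rank = r}) ⟨_, Matrix.of fun i j => (A i j : ℝ), fun _ _ => sign_signType_cast _, rfl⟩

lemma mr_le_rank {m n : ℕ} {A : Matrix (Fin m) (Fin n) SignType} {B : Matrix (Fin m) (Fin n) ℝ}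
    (hB : ∀ i j, sign (B i j) = A i j) : mr A ≤ B.rank :=
  Nat.sInf_le ⟨B, hB, rfl⟩

theorem stmt_5 {m n : ℕ} (A : Matrix (Fin m) (Fin n) SignType) (h : mr A = n - 2) :
    ∃ B : Matrix (Fin m) (Fin n) ℝ,
      (∀ i j, SignType.sign (B i j) = A i j) ∧ IsRationalMatrix B ∧ B.rank = n - 2 := by
  obtain ⟨B₀, hB₀A, hB₀⟩ := exists_rank_eq_mr A
  rw [h] at hB₀
  by_cases hn : n - 2 = 0
  · have hzero := B₀.eq_zero_of_rank_eq_zero (hB₀.trans hn)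
    exact ⟨B₀, hB₀A, fun i j => ⟨0, by simp [hzero]⟩, hB₀⟩
  obtain ⟨u, v, huv, hu, hv⟩ := B₀.rank_add_two_le_iff.1 (by simp only [Fintype.card_fin]; omega)
  obtain ⟨q, hq⟩ := exists_sameOrientedMatroid (β := ℚ) fun j => (u j, v j)
  obtain ⟨Bq, hBqA, hBq⟩ := hq.exists_matrix_sign_eq B₀
    ((B₀.mulVec_eq_zero_and_mulVec_eq_zero_iff u v).1 ⟨hu, hv⟩)
  obtain ⟨s, t, hst⟩ := linearIndependent_pair_iff_exists_det2_ne_zero.1 huv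
  rw [← sign_ne_zero, hq.sign_det2, sign_ne_zero] at hst
  have hBA : ∀ i j, sign (Bq.map (Rat.castHom ℝ) i j) = A i j := fun i j => by
    simp [sign_ratCast, hBqA, hB₀A]
  have hrank := Bq.rank_map_add_two_le (Rat.castHom ℝ) hBq hst
  rw [Fintype.card_fin] at hrank
  exact ⟨_, hBA, fun i j => ⟨Bq i j, rfl⟩, le_antisymm (by omega) (h ▸ mr_le_rank hBA)⟩
end
end

section
/- Let A be an m×n sign pattern matrix. Then mr(A) = n if and only if for every nonzero sign vector x ∈ {+,-,0}^n, the set of rows of A is not contained in x^⊥. -/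
open Matrix

noncomputable section

/- Auxiliary lemmas -/

lemma signCast_eq (s : SignType) : SignType.sign ((s : ℝ)) = s := by
  cases s
  · simp [sign_neg (by norm_num : ((SignType.neg : SignType) : ℝ) < 0)]
  · simp
  · simp [sign_pos (by norm_num : (0:ℝ) < ((SignType.pos : SignType) : ℝ))]

lemma signType_mul_eq_one : ∀ a b : SignType, a * b = 1 → a = b ∧ a ≠ 0 := by decide

lemma signType_mul_eq_neg_one : ∀ a b : SignType, a * b = -1 → a = -b ∧ a ≠ 0 := by decide

lemma signType_cases : ∀ a b : SignType, a ≠ 0 → b ≠ 0 → a = b ∨ a = -b := by decide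

lemma signType_eq_neg_self : ∀ a : SignType, a = -a → a = 0 := by decide

lemma signType_eq_both : ∀ a b : SignType, a = b → a = -b → a = 0 := by decide

lemma signCast_eq_zero {a : SignType} (h : (a : ℝ) = 0) : a = 0 := by
  cases a <;> simp_all

lemma coe_mul_coe_eq_one {a b : SignType} (hab : a = b) (ha : a ≠ 0) :
    ((a : ℝ)) * ((b : ℝ)) = 1 := by
  subst hab; cases a <;> simp_all <;> norm_num

lemma coe_mul_coe_eq_neg_one {a b : SignType} (hab : a = -b) (ha : a ≠ 0) :
    ((a : ℝ)) * ((b : ℝ)) = -1 := by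
  subst hab; cases b <;> simp_all <;> norm_num

lemma exists_pos_neg {n : ℕ} (f : Fin n → ℝ) (hsum : ∑ j, f j = 0) (j0 : Fin n)
    (h0 : f j0 ≠ 0) : (∃ j, 0 < f j) ∧ (∃ j, f j < 0) := by
  constructor
  · by_contra h
    push_neg at h
    exact h0 ((Finset.sum_eq_zero_iff_of_nonpos (fun j _ => h j)).mp hsum j0 (Finset.mem_univ _))
  · by_contra h
    push_neg at h
    exact h0 ((Finset.sum_eq_zero_iff_of_nonneg (fun j _ => h j)).mp hsum j0 (Finset.mem_univ _))

lemma rank_eq_of_ker {m n : ℕ} (B : Matrix (Fin m) (Fin n) ℝ)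
    (h : ∀ v, B.mulVec v = 0 → v = 0) : B.rank = n := by
  have hker : LinearMap.ker B.mulVecLin = ⊥ := by
    rw [LinearMap.ker_eq_bot']
    intro v hv
    exact h v (by simpa using hv)
  have h2 := LinearMap.finrank_range_add_finrank_ker B.mulVecLin
  rw [hker, finrank_bot, Module.finrank_fin_fun] at h2
  have hr : B.rank = Module.finrank ℝ (LinearMap.range B.mulVecLin) := rfl
  omega

lemma rank_lt_of_mulVec {m n : ℕ} (B : Matrix (Fin m) (Fin n) ℝ) (v : Fin n → ℝ)
    (hv : v ≠ 0) (h : B.mulVec v = 0) : B.rank < n := by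
  have h2 := LinearMap.finrank_range_add_finrank_ker B.mulVecLin
  rw [Module.finrank_fin_fun] at h2
  have hbot : LinearMap.ker B.mulVecLin ≠ ⊥ := by
    intro hbot
    have hv' : v ∈ LinearMap.ker B.mulVecLin := by simpa [LinearMap.mem_ker] using h
    rw [hbot, Submodule.mem_bot] at hv'
    exact hv hv'
  have hk : Module.finrank ℝ (LinearMap.ker B.mulVecLin) ≠ 0 := fun h0 =>
    hbot (Submodule.finrank_eq_zero.mp h0)
  have hr : B.rank = Module.finrank ℝ (LinearMap.range B.mulVecLin) := rfl
  omega

theorem stmt_10 {m n : ℕ} (A : Matrix (Fin m) (Fin n) SignType) :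
    mr A = n ↔
      ∀ x : Fin n → SignType, x ≠ 0 → ¬ (∀ i, SignPerp (A i) x) := by
  classical
  constructor
  · intro hm x hx hperp
    set P : Fin m → Finset (Fin n) :=
      fun i => Finset.univ.filter (fun j => A i j = x j ∧ A i j ≠ 0) with hP
    set N : Fin m → Finset (Fin n) :=
      fun i => Finset.univ.filter (fun j => A i j = -x j ∧ A i j ≠ 0) with hN
    set w : Fin m → Fin n → ℝ := fun i j =>
      if j ∈ P i then ((P i).card : ℝ)⁻¹ else if j ∈ N i then ((N i).card : ℝ)⁻¹ else 1 with hw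
    have hwpos : ∀ i j, 0 < w i j := by
      intro i j
      rw [hw]
      dsimp only
      split_ifs with h1 h2
      · have hc : (0:ℝ) < (P i).card := by exact_mod_cast Finset.card_pos.mpr ⟨j, h1⟩
        exact inv_pos.mpr hc
      · have hc : (0:ℝ) < (N i).card := by exact_mod_cast Finset.card_pos.mpr ⟨j, h2⟩
        exact inv_pos.mpr hc
      · norm_num
    set B : Matrix (Fin m) (Fin n) ℝ := fun i j => w i j * ((A i j : ℝ)) with hB
    have hsign : ∀ i j, SignType.sign (B i j) = A i j := by
      intro i j
      rw [hB]
      dsimp only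
      rw [sign_mul, sign_pos (hwpos i j), one_mul, signCast_eq]
    set v : Fin n → ℝ := fun j => ((x j : ℝ)) with hv
    have hvne : v ≠ 0 := by
      intro h0
      apply hx
      funext j
      exact signCast_eq_zero (congrFun h0 j)
    have hdisj : ∀ i j, j ∈ P i → j ∉ N i := by
      intro i j hjP hjN
      simp only [hP, hN, Finset.mem_filter, Finset.mem_univ, true_and] at hjP hjN
      exact hjP.2 (signType_eq_both _ _ hjP.1 hjN.1)
    have hmul : B.mulVec v = 0 := by
      funext i
      show ∑ j, B i j * v j = 0
      have hterm : ∀ j, B i j * v j =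
          (if j ∈ P i then ((P i).card : ℝ)⁻¹ else 0) +
          (if j ∈ N i then -(((N i).card : ℝ)⁻¹) else 0) := by
        intro j
        have hBv : B i j * v j = w i j * (((A i j : ℝ)) * ((x j : ℝ))) := by
          rw [hB, hv]; dsimp only; ring
        by_cases hjP : j ∈ P i
        · have hjN : j ∉ N i := hdisj i j hjP
          have hmem : A i j = x j ∧ A i j ≠ 0 := by
            simpa [hP] using hjP
          have hw1 : w i j = ((P i).card : ℝ)⁻¹ := by
            rw [hw]; dsimp only; rw [if_pos hjP]
          rw [hBv, hw1, coe_mul_coe_eq_one hmem.1 hmem.2, if_pos hjP, if_neg hjN]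
          ring
        · by_cases hjN : j ∈ N i
          · have hmem : A i j = -x j ∧ A i j ≠ 0 := by
              simpa [hN] using hjN
            have hw1 : w i j = ((N i).card : ℝ)⁻¹ := by
              rw [hw]; dsimp only; rw [if_neg hjP, if_pos hjN]
            rw [hBv, hw1, coe_mul_coe_eq_neg_one hmem.1 hmem.2, if_neg hjP, if_pos hjN]
            ring
          · have hz : ((A i j : ℝ)) * ((x j : ℝ)) = 0 := by
              by_cases hA0 : A i j = 0
              · rw [hA0]; simp
              · by_cases hx0 : x j = 0
                · rw [hx0]; simp
                · exfalso
                  rcases signType_cases (A i j) (x j) hA0 hx0 with hc | hc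
                  · apply hjP
                    simp only [hP, Finset.mem_filter, Finset.mem_univ, true_and]
                    exact ⟨hc, hA0⟩
                  · apply hjN
                    simp only [hN, Finset.mem_filter, Finset.mem_univ, true_and]
                    exact ⟨hc, hA0⟩
            rw [hBv, hz, if_neg hjP, if_neg hjN]
            ring
      rw [Finset.sum_congr rfl (fun j _ => hterm j), Finset.sum_add_distrib,
        Fintype.sum_ite_mem, Fintype.sum_ite_mem, Finset.sum_const, Finset.sum_const,
        nsmul_eq_mul, nsmul_eq_mul]
      rcases hperp i with hL | ⟨jp, jq, h1, h2, h3, h4⟩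
      · have hPe : P i = ∅ := by
          rw [hP]
          apply Finset.filter_eq_empty_iff.mpr
          intro j _
          rcases hL j with h | h
          · simp [h]
          · intro hc; exact hc.2 (hc.1.trans h)
        have hNe : N i = ∅ := by
          rw [hN]
          apply Finset.filter_eq_empty_iff.mpr
          intro j _
          rcases hL j with h | h
          · simp [h]
          · intro hc; exact hc.2 (by rw [hc.1, h]; simp)
        rw [hPe, hNe]
        simp
      · have hmemp : jp ∈ P i := by
          simp only [hP, Finset.mem_filter, Finset.mem_univ, true_and]; exact ⟨h1, h2⟩
        have hmemq : jq ∈ N i := by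
          simp only [hN, Finset.mem_filter, Finset.mem_univ, true_and]; exact ⟨h3, h4⟩
        have hPc : ((P i).card : ℝ) ≠ 0 :=
          Nat.cast_ne_zero.mpr (Finset.card_pos.mpr ⟨jp, hmemp⟩).ne'
        have hNc : ((N i).card : ℝ) ≠ 0 :=
          Nat.cast_ne_zero.mpr (Finset.card_pos.mpr ⟨jq, hmemq⟩).ne'
        rw [mul_inv_cancel₀ hPc]
        rw [mul_neg, mul_inv_cancel₀ hNc]
        ring
    have h1 : mr A ≤ B.rank := Nat.sInf_le ⟨B, hsign, rfl⟩
    have h2 : B.rank < n := rank_lt_of_mulVec B v hvne hmul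
    omega
  · intro h
    have key : ∀ B : Matrix (Fin m) (Fin n) ℝ,
        (∀ i j, SignType.sign (B i j) = A i j) → B.rank = n := by
      intro B hs
      apply rank_eq_of_ker
      intro v hv
      by_contra hv0
      set x := signVec v with hxdef
      have hx : x ≠ 0 := by
        intro h0
        apply hv0
        funext j
        have := congrFun h0 j
        simpa [hxdef, signVec, sign_eq_zero_iff] using this
      apply h x hx
      intro i
      have hsum : ∑ j, B i j * v j = 0 := by
        have := congrFun hv i
        simpa [Matrix.mulVec, dotProduct] using this
      by_cases hall : ∀ j, B i j * v j = 0
      · left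
        intro j
        rcases mul_eq_zero.mp (hall j) with h0 | h0
        · left; rw [← hs i j, h0, sign_zero]
        · right; simp [hxdef, signVec, h0]
      · right
        push_neg at hall
        obtain ⟨j0, hj0⟩ := hall
        obtain ⟨⟨jp, hjp⟩, ⟨jq, hjq⟩⟩ := exists_pos_neg _ hsum j0 hj0
        have hp : A i jp * x jp = 1 := by
          have h1 : SignType.sign (B i jp * v jp) = 1 := sign_pos hjp
          rw [sign_mul, hs i jp] at h1
          exact h1
        have hq : A i jq * x jq = -1 := by
          have h1 : SignType.sign (B i jq * v jq) = -1 := sign_neg hjq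
          rw [sign_mul, hs i jq] at h1
          exact h1
        obtain ⟨hp1, hp2⟩ := signType_mul_eq_one _ _ hp
        obtain ⟨hq1, hq2⟩ := signType_mul_eq_neg_one _ _ hq
        exact ⟨jp, jq, hp1, hp2, hq1, hq2⟩
    have hs0 : ∀ i j, SignType.sign ((fun i j => ((A i j : ℝ))) i j) = A i j :=
      fun i j => signCast_eq _
    have hmem : n ∈ {r | ∃ B : Matrix (Fin m) (Fin n) ℝ,
        (∀ i j, SignType.sign (B i j) = A i j) ∧ B.rank = r} :=
      ⟨fun i j => ((A i j : ℝ)), hs0, key _ hs0⟩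
    apply le_antisymm
    · exact Nat.sInf_le hmem
    · refine le_csInf ⟨n, hmem⟩ ?_
      rintro r ⟨B, hs, rfl⟩
      exact (key B hs).ge

end
end

section
/- For a nonzero sign vector x ∈ {+,-,0}^n with exactly t nonzero entries, the cardinality of x^⊥ is 3^{n-t}(3^t - 2(2^t - 1)). -/
open Matrix

noncomputable section

lemma arith_aux (a b X w u : ℕ) (ha : 1 ≤ a) (hab : 2 * a ≤ b + 2)
    (e1 : w + u = b * X) (e2 : u + X = a * X + a * X) :
    X + w = X * (b - 2 * (a - 1)) := by
  have e1' : (w : ℤ) + u = b * X := by exact_mod_cast e1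
  have e2' : (u : ℤ) + X = a * X + a * X := by exact_mod_cast e2
  have hineq : 2 * (a - 1) ≤ b := by omega
  zify [hineq, ha]
  linear_combination e1' - e2'

theorem stmt_12 {n t : ℕ} (x : Fin n → SignType) (hx : x ≠ 0)
    (ht : (Finset.univ.filter (fun i => x i ≠ 0)).card = t) :
    {c : Fin n → SignType | SignPerp c x}.ncard
      = 3 ^ (n - t) * (3 ^ t - 2 * (2 ^ t - 1)) := by
  classical
  have hneg : ∀ a : SignType, -a = 0 ↔ a = 0 := by decide
  have hsd : ∀ a : SignType, (Finset.univ \ {a}).card = 2 := by decide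
  have hzero : ∀ a b : SignType, b ≠ 0 → ((a ≠ b ∧ a ≠ -b) ↔ a = 0) := by decide
  have hucard : (Finset.univ : Finset SignType).card = 3 := by decide
  have hnegz : (-(0 : SignType)) = 0 := by decide
  have htn : t ≤ n := by
    rw [← ht]
    calc (Finset.univ.filter (fun i => x i ≠ 0)).card
        ≤ Finset.univ.card := Finset.card_filter_le _ _
      _ = n := by simp
  have ht1 : 1 ≤ t := by
    rw [← ht]
    obtain ⟨i, hi⟩ := Function.ne_iff.mp hx
    exact Finset.card_pos.mpr ⟨i, by simpa using hi⟩
  have hnt : (Finset.univ.filter (fun i => ¬ x i ≠ 0)).card = n - t := by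
    have h := Finset.card_filter_add_card_filter_not
      (s := (Finset.univ : Finset (Fin n))) (p := fun i => x i ≠ 0)
    simp only [Finset.card_univ, Fintype.card_fin, ht] at h
    omega
  have hpi : ∀ T : Fin n → Finset SignType,
      (Finset.univ.filter (fun c : Fin n → SignType => ∀ i, c i ∈ T i)).card = ∏ i, (T i).card := by
    intro T
    rw [← Fintype.card_piFinset]
    congr 1
    ext c
    simp [Fintype.mem_piFinset]
  have key : ∀ (T : Fin n → Finset SignType) (a b : ℕ),
      (∀ i, x i ≠ 0 → (T i).card = a) → (∀ i, x i = 0 → (T i).card = b) →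
      (Finset.univ.filter (fun c : Fin n → SignType => ∀ i, c i ∈ T i)).card
        = a ^ t * b ^ (n - t) := by
    intro T a b ha hb
    rw [hpi]
    rw [← Finset.prod_filter_mul_prod_filter_not Finset.univ (fun i => x i ≠ 0)]
    rw [Finset.prod_congr rfl (fun i hi => ha i (by simpa using (Finset.mem_filter.mp hi).2)),
        Finset.prod_congr rfl (fun i hi => hb i (by
          have := (Finset.mem_filter.mp hi).2; simpa using this))]
    rw [Finset.prod_const, Finset.prod_const, ht, hnt]
  -- card of A
  have cardA : (Finset.univ.filter (fun c : Fin n → SignType => ∀ i, x i ≠ 0 → c i = 0)).card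
      = 3 ^ (n - t) := by
    have hrw : (Finset.univ.filter (fun c : Fin n → SignType => ∀ i, x i ≠ 0 → c i = 0))
        = Finset.univ.filter (fun c : Fin n → SignType =>
            ∀ i, c i ∈ (if x i ≠ 0 then ({0} : Finset SignType) else Finset.univ)) := by
      apply Finset.filter_congr
      intro c _
      refine forall_congr' fun i => ?_
      by_cases h : x i ≠ 0 <;> simp [h]
    rw [hrw, key _ 1 3 (fun i hi => by simp [hi]) (fun i hi => by simp [hi, hucard]), one_pow, one_mul]
  -- card of Bᶜ
  have cardBc : (Finset.univ.filter (fun c : Fin n → SignType => ∀ i, x i ≠ 0 → c i ≠ x i)).card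
      = 2 ^ t * 3 ^ (n - t) := by
    have hrw : (Finset.univ.filter (fun c : Fin n → SignType => ∀ i, x i ≠ 0 → c i ≠ x i))
        = Finset.univ.filter (fun c : Fin n → SignType =>
            ∀ i, c i ∈ (if x i ≠ 0 then (Finset.univ \ {x i}) else Finset.univ)) := by
      apply Finset.filter_congr
      intro c _
      refine forall_congr' fun i => ?_
      by_cases h : x i ≠ 0 <;> simp [h]
    rw [hrw, key _ 2 3 (fun i hi => by simp [hi, hsd]) (fun i hi => by simp [hi, hucard])]
  -- card of Cᶜ
  have cardCc : (Finset.univ.filter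
        (fun c : Fin n → SignType => ∀ i, x i ≠ 0 → c i ≠ -(x i))).card
      = 2 ^ t * 3 ^ (n - t) := by
    have hrw : (Finset.univ.filter (fun c : Fin n → SignType => ∀ i, x i ≠ 0 → c i ≠ -(x i)))
        = Finset.univ.filter (fun c : Fin n → SignType =>
            ∀ i, c i ∈ (if x i ≠ 0 then (Finset.univ \ {-(x i)}) else Finset.univ)) := by
      apply Finset.filter_congr
      intro c _
      refine forall_congr' fun i => ?_
      by_cases h : x i ≠ 0 <;> simp [h]
    rw [hrw, key _ 2 3 (fun i hi => by simp [hi, hsd]) (fun i hi => by simp [hi, hucard])]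
  -- card of Bᶜ ∩ Cᶜ
  have cardD : (Finset.univ.filter
        (fun c : Fin n → SignType => ∀ i, x i ≠ 0 → (c i ≠ x i ∧ c i ≠ -(x i)))).card
      = 3 ^ (n - t) := by
    rw [← cardA]
    congr 1
    apply Finset.filter_congr
    intro c _
    exact forall_congr' fun i => imp_congr_right fun h => hzero _ _ h
  -- the set as a finset
  have hset : {c : Fin n → SignType | SignPerp c x}
      = ↑(Finset.univ.filter (fun c : Fin n → SignType =>
          (∀ i, x i ≠ 0 → c i = 0) ∨
          ((∃ i, x i ≠ 0 ∧ c i = x i) ∧ (∃ j, x j ≠ 0 ∧ c j = -(x j))))) := by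
    ext c
    simp only [Set.mem_setOf_eq, Finset.coe_filter, Finset.mem_univ, true_and]
    unfold SignPerp
    constructor
    · rintro (h | ⟨i, j, h1, h2, h3, h4⟩)
      · exact Or.inl fun i hi => (h i).resolve_right hi
      · exact Or.inr ⟨⟨i, fun h0 => h2 (h1.trans h0), h1⟩,
          ⟨j, fun h0 => h4 (by rw [h3, h0, hnegz]), h3⟩⟩
    · rintro (h | ⟨⟨i, hi, h1⟩, j, hj, h2⟩)
      · refine Or.inl fun i => ?_
        by_cases hxi : x i = 0
        · exact Or.inr hxi
        · exact Or.inl (h i hxi)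
      · exact Or.inr ⟨i, j, h1, fun h0 => hi (h1.symm.trans h0), h2,
          fun h0 => hj ((hneg _).mp (h2.symm.trans h0))⟩
  rw [hset, Set.ncard_coe_finset, Finset.filter_or]
  have hdisj : Disjoint
      (Finset.univ.filter (fun c : Fin n → SignType => ∀ i, x i ≠ 0 → c i = 0))
      (Finset.univ.filter (fun c : Fin n → SignType =>
        (∃ i, x i ≠ 0 ∧ c i = x i) ∧ (∃ j, x j ≠ 0 ∧ c j = -(x j)))) := by
    rw [Finset.disjoint_left]
    intro c hc1 hc2
    obtain ⟨⟨i, hi, h1⟩, -⟩ := (Finset.mem_filter.mp hc2).2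
    exact hi (h1.symm.trans ((Finset.mem_filter.mp hc1).2 i hi))
  rw [Finset.card_union_of_disjoint hdisj, cardA]
  -- now compute the card of the intersection part
  have huniv : (Finset.univ : Finset (Fin n → SignType)).card = 3 ^ n := by
    have h3c : Fintype.card SignType = 3 := by decide
    rw [Finset.card_univ, Fintype.card_fun, h3c, Fintype.card_fin]
  have e1 := Finset.card_filter_add_card_filter_not
    (s := (Finset.univ : Finset (Fin n → SignType)))
    (p := fun c => (∃ i, x i ≠ 0 ∧ c i = x i) ∧ (∃ j, x j ≠ 0 ∧ c j = -(x j)))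
  rw [huniv] at e1
  have hsplit : (Finset.univ.filter (fun c : Fin n → SignType =>
        ¬((∃ i, x i ≠ 0 ∧ c i = x i) ∧ (∃ j, x j ≠ 0 ∧ c j = -(x j)))))
      = (Finset.univ.filter (fun c : Fin n → SignType => ∀ i, x i ≠ 0 → c i ≠ x i))
        ∪ (Finset.univ.filter (fun c : Fin n → SignType => ∀ i, x i ≠ 0 → c i ≠ -(x i))) := by
    rw [← Finset.filter_or]
    apply Finset.filter_congr
    intro c _
    rw [not_and_or, not_exists, not_exists]
    constructor
    · rintro (h | h)
      · exact Or.inl fun i hi hc => h i ⟨hi, hc⟩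
      · exact Or.inr fun i hi hc => h i ⟨hi, hc⟩
    · rintro (h | h)
      · exact Or.inl fun i ⟨hi, hc⟩ => h i hi hc
      · exact Or.inr fun i ⟨hi, hc⟩ => h i hi hc
  rw [hsplit] at e1
  have e2 := Finset.card_union_add_card_inter
    (Finset.univ.filter (fun c : Fin n → SignType => ∀ i, x i ≠ 0 → c i ≠ x i))
    (Finset.univ.filter (fun c : Fin n → SignType => ∀ i, x i ≠ 0 → c i ≠ -(x i)))
  rw [← Finset.filter_and] at e2
  have hinter : (Finset.univ.filter (fun c : Fin n → SignType =>
        (∀ i, x i ≠ 0 → c i ≠ x i) ∧ (∀ i, x i ≠ 0 → c i ≠ -(x i))))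
      = Finset.univ.filter
          (fun c : Fin n → SignType => ∀ i, x i ≠ 0 → (c i ≠ x i ∧ c i ≠ -(x i))) := by
    apply Finset.filter_congr
    intro c _
    constructor
    · rintro ⟨h1, h2⟩ i hi; exact ⟨h1 i hi, h2 i hi⟩
    · intro h; exact ⟨fun i hi => (h i hi).1, fun i hi => (h i hi).2⟩
  rw [hinter, cardD, cardBc, cardCc] at e2
  -- final arithmetic
  have h23 : ∀ m : ℕ, 1 ≤ m → 2 * 2 ^ m ≤ 3 ^ m + 2 := by
    intro m
    induction m with
    | zero => intro h; exact absurd h (by norm_num)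
    | succ k ih =>
      intro _
      rcases Nat.eq_zero_or_pos k with hk | hk
      · subst hk; norm_num
      · have h1 : 2 ≤ 3 ^ k := by
          calc (2 : ℕ) ≤ 3 ^ 1 := by norm_num
            _ ≤ 3 ^ k := Nat.pow_le_pow_right (by norm_num) hk
        have h2 := ih hk
        rw [pow_succ, pow_succ]
        nlinarith
  have p3 : (3 : ℕ) ^ n = 3 ^ t * 3 ^ (n - t) := by
    rw [← pow_add, Nat.add_sub_cancel' htn]
  rw [p3] at e1
  exact arith_aux _ _ _ _ _ Nat.one_le_two_pow (h23 t ht1) e1 e2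
end
end

section
/- For each n ≥ 2, the maximum of |sign(V)| over all 2-dimensional subspaces V of ℝ^n equals 4n + 1. -/
/-!
Write `V = span {u, v}` with `u ≠ 0`. Every nonzero vector of `V` is a positive multiple of
`±(s • u + v)` or of `±u`. As `s` runs over `ℝ`, the sign vector of `s • u + v` can only change at
the at most `n` parameters `s = -vᵢ / uᵢ`, so it takes at most `2n + 1` values. If every `uᵢ ≠ 0`,
these values already include `± sign u` (take `s → ±∞`); otherwise there are fewer than `n` such
parameters. Either way the set `S` of these sign vectors together with `± sign u` has at most
`2n + 1` elements, and `sign V ⊆ {0} ∪ S ∪ -S`, where `S ∩ -S ⊇ {sign u, -sign u}`; hence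
`|sign V| ≤ 1 + 2 (2n + 1) - 2 = 4n + 1`.

The bound is attained by the plane spanned by `(1, …, 1)` and `(0, 1, …, n - 1)`: it contains the
vectors `(2i - t)ᵢ`, whose sign vectors for `-1 ≤ t ≤ 2n - 1`, their negatives for
`0 ≤ t ≤ 2n - 2`, and `0` are `4n + 1` distinct sign vectors.
-/

open Matrix

noncomputable section

open scoped Pointwise

lemma sign_eq_sign_iff {α : Type*} [Zero α] [LinearOrder α] {a b : α} :
    SignType.sign a = SignType.sign b ↔ (0 < a ↔ 0 < b) ∧ (a < 0 ↔ b < 0) := by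
  rcases lt_trichotomy a 0 with ha | rfl | ha <;> rcases lt_trichotomy b 0 with hb | rfl | hb <;>
    simp_all [sign_pos, sign_neg, lt_asymm]

theorem ncard_range_le_of_forall_notMem_Icc {α : Type*} (R : Finset ℝ) (f : ℝ → α)
    (hf : ∀ s s', s < s' → (∀ r ∈ R, r ∉ Set.Icc s s') → f s = f s') :
    (Set.range f).ncard ≤ 2 * R.card + 1 := by
  classical
  -- `idx s` locates `s` among the points of `R`; it takes at most `2 * #R + 1` values
  let idx : ℝ → ℕ := fun s => (R.filter (· < s)).card + (R.filter (· ≤ s)).card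
  have hidx : Set.range idx ⊆ Set.Iio (2 * R.card + 1) := by
    rintro _ ⟨s, rfl⟩
    have := R.card_filter_le (· < s)
    have := R.card_filter_le (· ≤ s)
    simp only [Set.mem_Iio, idx]
    omega
  have key : ∀ s s', s < s' → idx s = idx s' → f s = f s' := by
    intro s s' hss' h
    have hlt_sub : R.filter (· < s) ⊆ R.filter (· < s') :=
      Finset.monotone_filter_right R fun _ _ hr => hr.trans hss'
    have hle_sub : R.filter (· ≤ s) ⊆ R.filter (· ≤ s') :=
      Finset.monotone_filter_right R fun _ _ hr => hr.trans hss'.le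
    have hcard : (R.filter (· < s')).card ≤ (R.filter (· < s)).card ∧
        (R.filter (· ≤ s')).card ≤ (R.filter (· ≤ s)).card := by
      have := Finset.card_le_card hlt_sub
      have := Finset.card_le_card hle_sub
      simp only [idx] at h
      omega
    have hlt := Finset.eq_of_subset_of_card_le hlt_sub hcard.1
    have hle := Finset.eq_of_subset_of_card_le hle_sub hcard.2
    refine hf s s' hss' fun r hr ⟨hsr, hrs'⟩ => ?_
    have hrs : r ≤ s := by
      have : r ∈ R.filter (· ≤ s') := Finset.mem_filter.2 ⟨hr, hrs'⟩
      rw [← hle, Finset.mem_filter] at this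
      exact this.2
    have : r ∈ R.filter (· < s') := Finset.mem_filter.2 ⟨hr, (le_antisymm hrs hsr).trans_lt hss'⟩
    rw [← hlt, Finset.mem_filter] at this
    exact this.2.not_ge hsr
  have hfac : f.FactorsThrough idx := fun s s' h => by
    rcases lt_trichotomy s s' with hlt | rfl | hlt
    · exact key s s' hlt h
    · rfl
    · exact (key s' s hlt h.symm).symm
  have hfin : (Set.Iio (2 * R.card + 1)).Finite := Set.finite_Iio _
  calc (Set.range f).ncard = (Function.extend idx f (fun _ => f 0) '' Set.range idx).ncard := by
        rw [← Set.range_comp]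
        congr 2
        funext s
        exact (hfac.extend_apply _ s).symm
    _ ≤ (Set.range idx).ncard := Set.ncard_image_le (hfin.subset hidx)
    _ ≤ (Set.Iio (2 * R.card + 1)).ncard := Set.ncard_le_ncard hidx hfin
    _ = 2 * R.card + 1 := by simp

lemma sign_mul_add_eq {a : ℝ} (b s : ℝ) (ha : a ≠ 0) :
    SignType.sign (s * a + b) = SignType.sign a * SignType.sign (s - -b / a) := by
  rw [← sign_mul]
  congr 1
  field_simp
  ring

lemma signVec_smul {n : ℕ} (c : ℝ) (x : Fin n → ℝ) :
    signVec (c • x) = SignType.sign c • signVec x := by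
  funext i
  simp only [signVec, Pi.smul_apply, smul_eq_mul, sign_mul]

section AffineLine

variable {n : ℕ} (u v : Fin n → ℝ)

def affineRoots : Finset ℝ :=
  (Finset.univ.filter fun i => u i ≠ 0).image fun i => -v i / u i

lemma signVec_smul_add_eq_of_forall_notMem_Icc {s s' : ℝ} (hss' : s ≤ s')
    (h : ∀ r ∈ affineRoots u v, r ∉ Set.Icc s s') :
    signVec (s • u + v) = signVec (s' • u + v) := by
  funext i
  by_cases hu : u i = 0
  · simp [signVec, hu]
  have hr : -v i / u i ∈ affineRoots u v := Finset.mem_image_of_mem _ (by simp [hu])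
  simp only [signVec, Pi.add_apply, Pi.smul_apply, smul_eq_mul, sign_mul_add_eq _ _ hu]
  congr 1
  have := h _ hr
  rw [Set.mem_Icc, not_and_or, not_le, not_le] at this
  rcases this with hlt | hgt
  · rw [sign_pos (sub_pos.2 hlt), sign_pos (sub_pos.2 (hlt.trans_le hss'))]
  · rw [sign_neg (sub_neg.2 (hss'.trans_lt hgt)), sign_neg (sub_neg.2 hgt)]

lemma ncard_range_signVec_smul_add_le :
    (Set.range fun s : ℝ => signVec (s • u + v)).ncard ≤
      2 * (Finset.univ.filter fun i => u i ≠ 0).card + 1 :=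
  calc _ ≤ 2 * (affineRoots u v).card + 1 :=
        ncard_range_le_of_forall_notMem_Icc _ _ fun _ _ hss' h =>
          signVec_smul_add_eq_of_forall_notMem_Icc u v hss'.le h
    _ ≤ _ := by
        gcongr
        exact Finset.card_image_le

lemma signVec_mem_range_smul_add (hu : ∀ i, u i ≠ 0) :
    signVec u ∈ Set.range (fun s : ℝ => signVec (s • u + v)) ∧
      -signVec u ∈ Set.range (fun s : ℝ => signVec (s • u + v)) := by
  obtain ⟨M, hM⟩ := ((affineRoots u v).image abs).exists_le
  have hbound : ∀ i, |-v i / u i| ≤ M := fun i =>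
    hM _ (Finset.mem_image_of_mem _ (Finset.mem_image_of_mem _ (by simp [hu i])))
  refine ⟨⟨M + 1, funext fun i => ?_⟩, ⟨-(M + 1), funext fun i => ?_⟩⟩
  · have : 0 < M + 1 - -v i / u i := by linarith [le_abs_self (-v i / u i), hbound i]
    simp only [signVec, Pi.add_apply, Pi.smul_apply, smul_eq_mul, sign_mul_add_eq _ _ (hu i),
      sign_pos this, mul_one]
  · have : -(M + 1) - -v i / u i < 0 := by linarith [neg_abs_le (-v i / u i), hbound i]
    simp only [signVec, Pi.neg_apply, Pi.add_apply, Pi.smul_apply, smul_eq_mul,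
      sign_mul_add_eq _ _ (hu i), sign_neg this, mul_neg_one]

/-- Sign vectors of the nonzero vectors `a • u + c • v` with `c > 0`, or `c = 0`. -/
def halfPlaneSigns : Set (Fin n → SignType) :=
  Set.range (fun s : ℝ => signVec (s • u + v)) ∪ {signVec u, -signVec u}

lemma ncard_halfPlaneSigns_le : (halfPlaneSigns u v).ncard ≤ 2 * n + 1 := by
  have hrange := ncard_range_signVec_smul_add_le u v
  by_cases hu : ∀ i, u i ≠ 0
  · obtain ⟨hpos, hneg⟩ := signVec_mem_range_smul_add u v hu
    have hall : (Finset.univ.filter fun i => u i ≠ 0) = Finset.univ := by simpa using hu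
    rw [halfPlaneSigns,
      Set.union_eq_left.2 (Set.insert_subset hpos (Set.singleton_subset_iff.2 hneg))]
    simpa [hall] using hrange
  · obtain ⟨i, hi⟩ := not_forall.1 hu
    have hlt : (Finset.univ.filter fun i => u i ≠ 0).card < n := by
      simpa using Finset.card_lt_card (Finset.filter_ssubset.2 ⟨i, Finset.mem_univ _, hi⟩)
    have hpair := Set.ncard_insert_le (signVec u) {-signVec u}
    rw [Set.ncard_singleton] at hpair
    have := Set.ncard_union_le (Set.range fun s : ℝ => signVec (s • u + v))
      {signVec u, -signVec u}
    rw [halfPlaneSigns]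
    omega

lemma signVec_smul_add_smul_mem (a c : ℝ) :
    signVec (a • u + c • v) ∈ insert 0 (halfPlaneSigns u v ∪ -halfPlaneSigns u v) := by
  have neg_one_smul' (σ : Fin n → SignType) : (-1 : SignType) • σ = -σ := by
    funext i
    simp
  rcases eq_or_ne c 0 with rfl | hc
  · rw [zero_smul, add_zero, signVec_smul]
    rcases lt_trichotomy a 0 with ha | rfl | ha
    · rw [sign_neg ha, neg_one_smul']
      exact Or.inr (Or.inl (Or.inr (Or.inr rfl)))
    · exact Or.inl (by simp)
    · rw [sign_pos ha, one_smul]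
      exact Or.inr (Or.inl (Or.inr (Or.inl rfl)))
  have hline : a • u + c • v = c • ((a / c) • u + v) := by
    rw [smul_add, smul_smul, mul_div_cancel₀ _ hc]
  have hmem : signVec ((a / c) • u + v) ∈ halfPlaneSigns u v := Or.inl ⟨a / c, rfl⟩
  rw [hline, signVec_smul]
  rcases hc.lt_or_gt with hc | hc
  · rw [sign_neg hc, neg_one_smul']
    exact Or.inr (Or.inr (Set.neg_mem_neg.2 hmem))
  · rw [sign_pos hc, one_smul]
    exact Or.inr (Or.inl hmem)

end AffineLine

lemma ncard_insert_union_neg_add_one_le {α : Type*} [InvolutiveNeg α] {S : Set α} (hS : S.Finite)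
    {w : α} (hw : w ∈ S) (hw' : -w ∈ S) (hne : w ≠ -w) (z : α) :
    (insert z (S ∪ -S)).ncard + 1 ≤ 2 * S.ncard := by
  have hpair : ({w, -w} : Set α) ⊆ S ∩ -S :=
    Set.insert_subset ⟨hw, by simpa using hw'⟩
      (Set.singleton_subset_iff.2 ⟨hw', Set.neg_mem_neg.2 hw⟩)
  have hinter : 2 ≤ (S ∩ -S).ncard :=
    (Set.ncard_pair hne).symm.le.trans (Set.ncard_le_ncard hpair (hS.inter_of_left _))
  have hunion := Set.ncard_union_add_ncard_inter S (-S) hS hS.neg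
  have hinsert := Set.ncard_insert_le z (S ∪ -S)
  rw [Set.ncard_neg] at hunion
  omega

lemma Submodule.exists_ne_zero_le_span_pair {K M : Type*} [Field K] [AddCommGroup M] [Module K M]
    {V : Submodule K M} (hV : Module.finrank K V = 2) :
    ∃ u v : M, u ≠ 0 ∧ V ≤ Submodule.span K {u, v} := by
  have : Module.Finite K V := Module.finite_of_finrank_pos (by omega)
  let b := Module.finBasisOfFinrankEq K V hV
  refine ⟨b 0, b 1, by simpa using b.ne_zero 0, fun x hx => Submodule.mem_span_pair.2
    ⟨b.repr ⟨x, hx⟩ 0, b.repr ⟨x, hx⟩ 1, ?_⟩⟩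
  have := congrArg Subtype.val (b.sum_repr ⟨x, hx⟩)
  simpa only [Fin.sum_univ_two, Submodule.coe_add, Submodule.coe_smul] using this

theorem ncard_signSet_le {n : ℕ} (V : Submodule ℝ (Fin n → ℝ)) (hV : Module.finrank ℝ V = 2) :
    (signSet V).ncard ≤ 4 * n + 1 := by
  obtain ⟨u, v, hu, hVuv⟩ := Submodule.exists_ne_zero_le_span_pair hV
  have hsub : signSet V ⊆ insert 0 (halfPlaneSigns u v ∪ -halfPlaneSigns u v) := by
    rintro _ ⟨x, hx, rfl⟩
    obtain ⟨a, c, rfl⟩ := Submodule.mem_span_pair.1 (hVuv hx)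
    exact signVec_smul_add_smul_mem u v a c
  have hne : signVec u ≠ -signVec u := by
    obtain ⟨i, hi⟩ := Function.ne_iff.1 hu
    exact fun h => hi (by simpa [signVec] using congrFun h i)
  have hunion := ncard_insert_union_neg_add_one_le (S := halfPlaneSigns u v) (Set.toFinite _)
    (Or.inr (Or.inl rfl)) (Or.inr (Or.inr rfl)) hne 0
  have hhalf := ncard_halfPlaneSigns_le u v
  calc (signSet V).ncard ≤ (insert 0 (halfPlaneSigns u v ∪ -halfPlaneSigns u v)).ncard :=
        Set.ncard_le_ncard hsub (Set.toFinite _)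
    _ ≤ 4 * n + 1 := by omega

lemma zero_mem_signSet {n : ℕ} (V : Submodule ℝ (Fin n → ℝ)) : 0 ∈ signSet V :=
  ⟨0, V.zero_mem, funext fun _ => sign_zero⟩

lemma neg_mem_signSet {n : ℕ} {V : Submodule ℝ (Fin n → ℝ)} {σ : Fin n → SignType}
    (h : σ ∈ signSet V) : -σ ∈ signSet V := by
  obtain ⟨x, hx, rfl⟩ := h
  exact ⟨-x, V.neg_mem hx, funext fun i => by simp [signVec, Left.sign_neg]⟩

def stairs (n : ℕ) (t : ℤ) : Fin n → SignType := fun i => SignType.sign (2 * (i : ℤ) - t)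

def stairPlane (n : ℕ) : Submodule ℝ (Fin n → ℝ) :=
  Submodule.span ℝ {fun _ => 1, fun i : Fin n => ((i : ℕ) : ℝ)}

section Stairs

variable {n : ℕ}

lemma finrank_stairPlane (hn : 2 ≤ n) : Module.finrank ℝ (stairPlane n) = 2 := by
  have hli : LinearIndependent ℝ ![(fun _ => 1 : Fin n → ℝ), fun i : Fin n => ((i : ℕ) : ℝ)] := by
    rw [LinearIndependent.pair_iff]
    intro a c h
    have h0 := congrFun h ⟨0, by omega⟩
    have h1 := congrFun h ⟨1, by omega⟩
    simp only [Pi.add_apply, Pi.smul_apply, smul_eq_mul, mul_one, CharP.cast_eq_zero, mul_zero,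
      add_zero, Pi.zero_apply, Nat.cast_one] at h0 h1
    exact ⟨h0, by linarith⟩
  rw [stairPlane, ← Matrix.range_cons_cons_empty, finrank_span_eq_card hli, Fintype.card_fin]

lemma stairs_mem_signSet (t : ℤ) : stairs n t ∈ signSet (stairPlane n) := by
  refine ⟨(-t : ℝ) • (fun _ : Fin n => (1 : ℝ)) + (2 : ℝ) • (fun i : Fin n => ((i : ℕ) : ℝ)),
    Submodule.mem_span_pair.2 ⟨_, _, rfl⟩, funext fun i => ?_⟩
  simp only [signVec, stairs, ← sign_intCast (α := ℝ), Pi.add_apply, Pi.smul_apply, smul_eq_mul]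
  push_cast
  ring_nf

lemma stairs_injOn : Set.InjOn (stairs n) (Set.Icc (-1 : ℤ) (2 * n - 1)) := by
  intro t ht t' ht' h
  by_contra hne
  wlog htt : t < t' generalizing t t'
  · exact this ht' ht h.symm (Ne.symm hne) (lt_of_le_of_ne (not_lt.1 htt) (Ne.symm hne))
  rw [Set.mem_Icc] at ht ht'
  -- the coordinate `i` with `2 i ∈ {t, t + 1}` separates the two sign vectors
  obtain ⟨i, hi⟩ : ∃ i : ℕ, (i : ℤ) = (t + 1) / 2 := ⟨_, Int.toNat_of_nonneg (by omega)⟩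
  have := congrFun h ⟨i, by omega⟩
  simp only [stairs, sign_eq_sign_iff] at this
  omega

lemma stairs_ne_neg_stairs (hn : 2 ≤ n) {t t' : ℤ} (ht : t ∈ Set.Icc (-1 : ℤ) (2 * n - 1))
    (ht' : t' ∈ Set.Icc (0 : ℤ) (2 * n - 2)) : stairs n t ≠ -stairs n t' := by
  intro h
  rw [Set.mem_Icc] at ht ht'
  have h0 := congrFun h ⟨0, by omega⟩
  have h1 := congrFun h ⟨n - 1, by omega⟩
  simp only [stairs, Pi.neg_apply, ← Left.sign_neg, sign_eq_sign_iff] at h0 h1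
  push_cast at h0 h1
  omega

lemma stairs_ne_zero (hn : 2 ≤ n) (t : ℤ) : stairs n t ≠ 0 := by
  intro h
  have h0 := congrFun h ⟨0, by omega⟩
  have h1 := congrFun h ⟨1, by omega⟩
  simp only [stairs, Pi.zero_apply, sign_eq_zero_iff] at h0 h1
  push_cast at h0 h1
  omega

lemma le_ncard_signSet_stairPlane (hn : 2 ≤ n) :
    4 * n + 1 ≤ (signSet (stairPlane n)).ncard := by
  classical
  let up := (Finset.Icc (-1 : ℤ) (2 * n - 1)).image (stairs n)
  let down := (Finset.Icc (0 : ℤ) (2 * n - 2)).image fun t => -stairs n t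
  have hinj : Set.InjOn (stairs n) (Finset.Icc (-1 : ℤ) (2 * n - 1)) := by
    simpa using stairs_injOn
  have hup : up.card = 2 * n + 1 := by
    rw [Finset.card_image_of_injOn hinj, Int.card_Icc]
    omega
  have hdown : down.card = 2 * n - 1 := by
    have hinj' : Set.InjOn (fun t => -stairs n t) (Finset.Icc (0 : ℤ) (2 * n - 2)) :=
      neg_injective.comp_injOn <| hinj.mono fun t => by
        simp only [Finset.coe_Icc, Set.mem_Icc]
        omega
    rw [Finset.card_image_of_injOn hinj', Int.card_Icc]
    omega
  have hdisj : Disjoint up down := by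
    simp only [up, down, Finset.disjoint_left, Finset.mem_image, Finset.mem_Icc]
    rintro _ ⟨t, ht, rfl⟩ ⟨t', ht', h⟩
    exact stairs_ne_neg_stairs hn ht ht' h.symm
  have hzero : (0 : Fin n → SignType) ∉ up ∪ down := by
    simp only [up, down, Finset.mem_union, Finset.mem_image]
    rintro (⟨t, -, h⟩ | ⟨t, -, h⟩)
    · exact stairs_ne_zero hn t h
    · exact stairs_ne_zero hn t (by simpa using congrArg Neg.neg h)
  have hsub : (↑(insert 0 (up ∪ down)) : Set (Fin n → SignType)) ⊆ signSet (stairPlane n) := by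
    simp only [up, down, Finset.coe_insert, Finset.coe_union, Finset.coe_image]
    rintro _ (rfl | ⟨t, -, rfl⟩ | ⟨t, -, rfl⟩)
    · exact zero_mem_signSet _
    · exact stairs_mem_signSet t
    · exact neg_mem_signSet (stairs_mem_signSet t)
  calc 4 * n + 1 = (insert 0 (up ∪ down)).card := by
        rw [Finset.card_insert_of_notMem hzero, Finset.card_union_of_disjoint hdisj, hup, hdown]
        omega
    _ ≤ _ := by
        rw [← Set.ncard_coe_finset]
        exact Set.ncard_le_ncard hsub (Set.toFinite _)

end Stairs

theorem stmt_16 {n : ℕ} (hn : 2 ≤ n) :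
    IsGreatest {c : ℕ | ∃ V : Submodule ℝ (Fin n → ℝ),
        Module.finrank ℝ V = 2 ∧ (signSet V).ncard = c} (4 * n + 1) := by
  refine ⟨⟨stairPlane n, finrank_stairPlane hn, ?_⟩, ?_⟩
  · exact le_antisymm (ncard_signSet_le _ (finrank_stairPlane hn)) (le_ncard_signSet_stairPlane hn)
  · rintro _ ⟨V, hV, rfl⟩
    exact ncard_signSet_le V hV
end
end

section
/- For each n ≥ 3, there exists a 3-dimensional subspace of ℝ^n whose set of sign vectors has cardinality at least 3(4n - 3); hence S_{3,n} ≥ 3(4n - 3), where S_{3,n} is the maximum of |sign(L)| over 3-dimensional subspaces L of ℝ^n. -/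
open Matrix

noncomputable section

namespace Stmt17Aux

def e (b : Bool) : ℝ := if b then 1 else -1
def sgnb (b : Bool) : SignType := if b then 1 else -1

lemma sign_cast (s : SignType) : SignType.sign ((s:ℝ)) = s := by cases s <;> simp

lemma sign_e_mul (b : Bool) (t : ℝ) : SignType.sign (e b * t) = sgnb b * SignType.sign t := by
  cases b <;> simp [e, sgnb, sign_mul, Left.sign_neg]

lemma sgnb_mul_eq_zero {b : Bool} {x : SignType} (h : sgnb b * x = 0) : x = 0 := by
  revert h; cases b <;> cases x <;> decide

lemma sgnb_ne_zero (b : Bool) : sgnb b ≠ 0 := by cases b <;> simp [sgnb]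



lemma core_lt {m : ℕ} (hm : 2 ≤ m) {b b' : Bool} {k k' : ℕ} (hk' : k' < 2*m) (hlt : k < k')
    (H : ∀ j : ℕ, 1 ≤ j → j ≤ m →
      sgnb b * SignType.sign (2*(j:ℝ) - k - 1) = sgnb b' * SignType.sign (2*(j:ℝ) - k' - 1)) :
    False := by
  rcases Nat.even_or_odd k with ⟨a, ha⟩ | ⟨a, ha⟩
  · rcases Nat.even_or_odd k' with ⟨a', ha'⟩ | ⟨a', ha'⟩
    · -- both even
      have haa : a < a' := by omega
      have ha1 := H (a+1) (by omega) (by omega)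
      have ha2 := H (a'+1) (by omega) (by omega)
      have e1 : (2*((a+1:ℕ):ℝ) - k - 1) = 1 := by push_cast [ha]; ring
      have e2 : (2*((a+1:ℕ):ℝ) - k' - 1) < 0 := by
        have : (a:ℝ) + 1 ≤ a' := by exact_mod_cast haa
        push_cast [ha']; linarith
      have e3 : (0:ℝ) < 2*((a'+1:ℕ):ℝ) - k - 1 := by
        have : (a:ℝ) < a' := by exact_mod_cast haa
        push_cast [ha]; linarith
      have e4 : (2*((a'+1:ℕ):ℝ) - k' - 1) = 1 := by push_cast [ha']; ring
      rw [e1, sign_one, sign_neg e2] at ha1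
      rw [e4, sign_one, sign_pos e3] at ha2
      revert ha1 ha2; cases b <;> cases b' <;> decide
    · -- k even, k' odd
      have ha1 := H (a'+1) (by omega) (by omega)
      have e1 : (0:ℝ) < 2*((a'+1:ℕ):ℝ) - k - 1 := by
        have : (k:ℝ) + 1 ≤ k' := by exact_mod_cast hlt
        push_cast [ha'] at *; linarith
      have e2 : (2*((a'+1:ℕ):ℝ) - k' - 1) = 0 := by push_cast [ha']; ring
      rw [sign_pos e1, e2, sign_zero] at ha1
      revert ha1; cases b <;> cases b' <;> decide
  · -- k odd
    have ha1 := H (a+1) (by omega) (by omega)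
    have e1 : (2*((a+1:ℕ):ℝ) - k - 1) = 0 := by push_cast [ha]; ring
    have e2 : (2*((a+1:ℕ):ℝ) - k' - 1) < 0 := by
      have : (k:ℝ) + 1 ≤ k' := by exact_mod_cast hlt
      push_cast [ha] at *; linarith
    rw [e1, sign_zero, sign_neg e2] at ha1
    revert ha1; cases b <;> cases b' <;> decide

lemma core {m : ℕ} (hm : 2 ≤ m) {b b' : Bool} {k k' : ℕ} (hk : k < 2*m) (hk' : k' < 2*m)
    (H : ∀ j : ℕ, 1 ≤ j → j ≤ m →
      sgnb b * SignType.sign (2*(j:ℝ) - k - 1) = sgnb b' * SignType.sign (2*(j:ℝ) - k' - 1)) :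
    b = b' ∧ k = k' := by
  have hkk : k = k' := by
    rcases lt_trichotomy k k' with h|h|h
    · exact (core_lt hm hk' h H).elim
    · exact h
    · exact (core_lt hm hk h (fun j h1 h2 => (H j h1 h2).symm)).elim
  subst hkk
  refine ⟨?_, rfl⟩
  by_cases h1 : k = 1
  · have H2 := H 2 (by omega) (by omega)
    have e : (0:ℝ) < 2*((2:ℕ):ℝ) - k - 1 := by push_cast [h1]; norm_num
    rw [sign_pos e] at H2
    revert H2; cases b <;> cases b' <;> decide
  · have H2 := H 1 (by omega) (by omega)
    have e : (2*((1:ℕ):ℝ) - k - 1) ≠ 0 := by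
      push_cast
      intro hc
      have hk1 : (k:ℝ) = 1 := by linarith
      exact h1 (by exact_mod_cast hk1)
    have hs : SignType.sign (2*((1:ℕ):ℝ) - k - 1) ≠ 0 := by simpa [sign_eq_zero_iff] using e
    generalize SignType.sign (2*((1:ℕ):ℝ) - (k:ℝ) - 1) = c at H2 hs
    revert H2 hs; cases b <;> cases b' <;> cases c <;> decide


def u0 (n : ℕ) : Fin n → ℝ := fun i => if (i:ℕ) = 0 then 1 else 0
def u1 (n : ℕ) : Fin n → ℝ := fun i => if (i:ℕ) = 0 then 0 else 1
def u2 (n : ℕ) : Fin n → ℝ := fun i => if (i:ℕ) = 0 then 0 else ((i:ℕ):ℝ)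

def enc (n : ℕ) (p : SignType × Option (Bool × Fin (2*(n-1)))) : Fin n → ℝ :=
  fun i => if (i:ℕ) = 0 then ((p.1 : ℝ)) else
    match p.2 with
    | none => 0
    | some q => e q.1 * (2*((i:ℕ):ℝ) - ((q.2:ℕ):ℝ) - 1)

lemma signVec_enc_zero {n : ℕ} (p) {i : Fin n} (hi : (i:ℕ) = 0) :
    signVec (enc n p) i = p.1 := by
  simp [signVec, enc, hi, sign_cast]

lemma signVec_enc_none {n : ℕ} {s : SignType} {i : Fin n} (hi : (i:ℕ) ≠ 0) :
    signVec (enc n (s, none)) i = 0 := by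
  simp [signVec, enc, hi]

lemma signVec_enc_some {n : ℕ} {s : SignType} {b : Bool} {k : Fin (2*(n-1))} {i : Fin n}
    (hi : (i:ℕ) ≠ 0) :
    signVec (enc n (s, some (b,k))) i
      = sgnb b * SignType.sign (2*((i:ℕ):ℝ) - ((k:ℕ):ℝ) - 1) := by
  simp only [signVec, enc, hi, if_neg hi]
  exact sign_e_mul b _

lemma inj {n : ℕ} (hn : 3 ≤ n) : Function.Injective (fun p => signVec (enc n p)) := by
  rintro ⟨s, o⟩ ⟨s', o'⟩ h
  simp only [] at h
  have h0 := congrFun h ⟨0, by omega⟩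
  rw [signVec_enc_zero _ rfl, signVec_enc_zero _ rfl] at h0
  obtain rfl : s = s' := h0
  suffices ho : o = o' by rw [ho]
  rcases o with _ | ⟨b, k⟩ <;> rcases o' with _ | ⟨b', k'⟩
  · rfl
  · exfalso
    have A := congrFun h (⟨1, by omega⟩ : Fin n)
    have B := congrFun h (⟨2, by omega⟩ : Fin n)
    rw [signVec_enc_none (by norm_num), signVec_enc_some (by norm_num)] at A B
    have A' := (sign_eq_zero_iff.mp (sgnb_mul_eq_zero A.symm))
    have B' := (sign_eq_zero_iff.mp (sgnb_mul_eq_zero B.symm))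
    push_cast at A' B'
    linarith
  · exfalso
    have A := congrFun h (⟨1, by omega⟩ : Fin n)
    have B := congrFun h (⟨2, by omega⟩ : Fin n)
    rw [signVec_enc_some (by norm_num), signVec_enc_none (by norm_num)] at A B
    have A' := (sign_eq_zero_iff.mp (sgnb_mul_eq_zero A))
    have B' := (sign_eq_zero_iff.mp (sgnb_mul_eq_zero B))
    push_cast at A' B'
    linarith
  · have H : ∀ j : ℕ, 1 ≤ j → j ≤ n-1 →
        sgnb b * SignType.sign (2*(j:ℝ) - (k:ℕ) - 1)
          = sgnb b' * SignType.sign (2*(j:ℝ) - (k':ℕ) - 1) := by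
      intro j h1 h2
      have hj : j < n := by omega
      have := congrFun h (⟨j, hj⟩ : Fin n)
      rwa [signVec_enc_some (by simpa using (by omega : j ≠ 0)),
        signVec_enc_some (by simpa using (by omega : j ≠ 0))] at this
    obtain ⟨hb, hk⟩ := core (m := n-1) (by omega) k.isLt k'.isLt H
    subst hb
    congr 1
    exact Prod.ext rfl (Fin.ext hk)

lemma enc_mem {n : ℕ} (p) :
    enc n p ∈ Submodule.span ℝ (Set.range ![u0 n, u1 n, u2 n]) := by
  have m0 : u0 n ∈ Submodule.span ℝ (Set.range ![u0 n, u1 n, u2 n]) :=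
    Submodule.subset_span ⟨0, rfl⟩
  have m1 : u1 n ∈ Submodule.span ℝ (Set.range ![u0 n, u1 n, u2 n]) :=
    Submodule.subset_span ⟨1, rfl⟩
  have m2 : u2 n ∈ Submodule.span ℝ (Set.range ![u0 n, u1 n, u2 n]) :=
    Submodule.subset_span ⟨2, rfl⟩
  obtain ⟨s, o⟩ := p
  rcases o with _ | ⟨b, k⟩
  · have he : enc n (s, none) = (s:ℝ) • u0 n := by
      funext i; by_cases hi : (i:ℕ) = 0 <;> simp [enc, u0, hi]
    rw [he]; exact Submodule.smul_mem _ _ m0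
  · have he : enc n (s, some (b,k))
        = (s:ℝ) • u0 n + ((-(e b * (((k:ℕ):ℝ)+1))) • u1 n + (2 * e b) • u2 n) := by
      funext i
      by_cases hi : (i:ℕ) = 0 <;> simp [enc, u0, u1, u2, hi] <;> ring
    rw [he]
    exact add_mem (Submodule.smul_mem _ _ m0)
      (add_mem (Submodule.smul_mem _ _ m1) (Submodule.smul_mem _ _ m2))

lemma indep {n : ℕ} (hn : 3 ≤ n) : LinearIndependent ℝ ![u0 n, u1 n, u2 n] := by
  rw [Fintype.linearIndependent_iff]
  intro g hg
  simp only [Fin.sum_univ_three, Matrix.cons_val_zero, Matrix.cons_val_one,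
    Matrix.head_cons, Matrix.cons_val_two, Matrix.tail_cons] at hg
  have h0 := congrFun hg (⟨0, by omega⟩ : Fin n)
  have h1 := congrFun hg (⟨1, by omega⟩ : Fin n)
  have h2 := congrFun hg (⟨2, by omega⟩ : Fin n)
  simp [u0, u1, u2] at h0 h1 h2
  intro i
  fin_cases i
  · exact h0
  · show g 1 = 0; linarith
  · show g 2 = 0; linarith


end Stmt17Aux

open Stmt17Aux in
theorem stmt_17 {n : ℕ} (hn : 3 ≤ n) :
    ∃ L : Submodule ℝ (Fin n → ℝ), Module.finrank ℝ L = 3 ∧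
      3 * (4 * n - 3) ≤ (signSet L).ncard := by
  refine ⟨Submodule.span ℝ (Set.range ![u0 n, u1 n, u2 n]), ?_, ?_⟩
  · rw [finrank_span_eq_card (indep hn)]
    simp
  · have hsub : Set.range (fun p => signVec (enc n p))
        ⊆ signSet (Submodule.span ℝ (Set.range ![u0 n, u1 n, u2 n])) := by
      rintro _ ⟨p, rfl⟩
      exact ⟨enc n p, enc_mem p, rfl⟩
    have hcard : (Set.range (fun p => signVec (enc n p))).ncard
        = Fintype.card (SignType × Option (Bool × Fin (2*(n-1)))) := by
      rw [Set.ncard_eq_toFinset_card', Set.toFinset_range,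
        Finset.card_image_of_injective _ (inj hn), Finset.card_univ]
    have hc3 : Fintype.card SignType = 3 := rfl
    have hcc : Fintype.card (SignType × Option (Bool × Fin (2*(n-1)))) = 3 * (4*n-3) := by
      rw [Fintype.card_prod, Fintype.card_option, Fintype.card_prod, Fintype.card_bool,
        Fintype.card_fin, hc3]
      omega
    calc 3 * (4*n-3) = (Set.range (fun p => signVec (enc n p))).ncard := by rw [hcard, hcc]
      _ ≤ _ := Set.ncard_le_ncard hsub (Set.toFinite _)
end
end
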